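/- arXiv:2301.00476 — 6 statements merged into one kernel-verified Lean document; each statement's English description precedes it below -/
import Mathlib

section
/- Let A be an abelian group and let B be a subgroup of the group Hom_ℤ(A, ℤ) of additive group homomorphisms A → ℤ. If the image of B under the natural map Hom_ℤ(A, ℤ) → Hom_ℤ(A, ℝ) (postcomposition with the inclusion ℤ ↪ ℝ) spans an ℝ-subspace of finite dimension d of Hom_ℤ(A, ℝ), then B is a free abelian group of rank d. -/
/-- **Specker-type lemma** (Lemma on subgroups of `Hom_ℤ(A, ℤ)`).
Let `A` be an abelian group and `B` a subgroup of `Hom_ℤ(A, ℤ)`.  If the image of `B` in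
`Hom_ℤ(A, ℝ)` (here realized inside the real vector space of all functions `A → ℝ`, via
postcomposition with the inclusion `ℤ ↪ ℝ`) spans an `ℝ`-subspace of finite dimension `d`,
then `B` is free abelian of rank `d`, i.e. `B ≃ₗ[ℤ] ℤ^d`. -/
theorem stmt_0 {A : Type*} [AddCommGroup A] (B : AddSubgroup (A →+ ℤ)) (d : ℕ)
    (hfin : FiniteDimensional ℝ
      (Submodule.span ℝ ((fun f : A →+ ℤ => fun a : A => ((f a : ℤ) : ℝ)) '' (B : Set (A →+ ℤ)))))
    (hd : Module.finrank ℝ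
      (Submodule.span ℝ ((fun f : A →+ ℤ => fun a : A => ((f a : ℤ) : ℝ)) '' (B : Set (A →+ ℤ))))
      = d) :
    Nonempty (B ≃ₗ[ℤ] (Fin d → ℤ)) := by
  classical
  set S : Set (A → ℝ) :=
    (fun f : A →+ ℤ => fun a : A => ((f a : ℤ) : ℝ)) '' (B : Set (A →+ ℤ)) with hS
  set V : Submodule ℝ (A → ℝ) := Submodule.span ℝ S with hV
  -- evaluation functionals on V
  let ε : A → Module.Dual ℝ V := fun a => (LinearMap.proj a).comp V.subtype
  have hspan : Submodule.span ℝ (Set.range ε) = ⊤ := by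
    apply Submodule.span_eq_top_of_ne_zero
    intro z hz
    by_contra hcon
    push_neg at hcon
    apply hz
    ext a
    have := hcon (ε a) ⟨a, rfl⟩
    simpa [ε] using this
  -- pick a basis of the dual inside the evaluations
  obtain ⟨s, hs_sub, hs_span, hs_li⟩ := exists_linearIndependent ℝ (Set.range ε)
  rw [hspan] at hs_span
  let b0 : Module.Basis s ℝ (Module.Dual ℝ V) := Module.Basis.mk hs_li (by rw [Subtype.range_val, hs_span])
  haveI : Fintype s := FiniteDimensional.fintypeBasisIndex b0
  have hcard : Fintype.card s = d := by
    rw [← Module.finrank_eq_card_basis b0, Subspace.dual_finrank_eq, hd]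
  let e : Fin d ≃ s := (Fintype.equivFinOfCardEq hcard).symm
  -- choose evaluation points
  have hpt : ∀ i : Fin d, ∃ a : A, ε a = (e i : Module.Dual ℝ V) := fun i => hs_sub (e i).2
  choose a ha using hpt
  -- key injectivity : a vector of V vanishing at all points a i is zero
  have hVinj : ∀ v : V, (∀ i : Fin d, (v : A → ℝ) (a i) = 0) → v = 0 := by
    intro v hv
    rw [← Module.forall_dual_apply_eq_zero_iff ℝ v]
    intro φ
    have hφ : φ ∈ Submodule.span ℝ s := hs_span ▸ Submodule.mem_top
    induction hφ using Submodule.span_induction with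
    | mem x hx =>
      have : ε (a (e.symm ⟨x, hx⟩)) = x := by
        rw [ha (e.symm ⟨x, hx⟩)]; simp
      rw [← this]
      simpa [ε] using hv (e.symm ⟨x, hx⟩)
    | zero => simp
    | add x y _ _ hx hy => simp [hx, hy]
    | smul c x _ hx => simp [hx]
  -- the evaluation map B →ₗ ℤ^d
  let g : B →ₗ[ℤ] (Fin d → ℤ) :=
    { toFun := fun f i => (f : A →+ ℤ) (a i)
      map_add' := by intro f f'; ext i; simp
      map_smul' := by intro c f; ext i; simp }
  have hmemV : ∀ f : B, (fun x : A => (((f : A →+ ℤ) x : ℤ) : ℝ)) ∈ V :=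
    fun f => Submodule.subset_span ⟨(f : A →+ ℤ), f.2, rfl⟩
  have hg : Function.Injective g := by
    rw [injective_iff_map_eq_zero]
    intro f hf
    have h0 : (⟨_, hmemV f⟩ : V) = 0 := by
      apply hVinj
      intro i
      have : (f : A →+ ℤ) (a i) = 0 := congrFun hf i
      simp [this]
    have h1 : ∀ x : A, (((f : A →+ ℤ) x : ℤ) : ℝ) = 0 := fun x =>
      congrFun (congrArg (Subtype.val) h0) x
    ext x
    exact_mod_cast h1 x
  -- B is free of some finite rank n
  obtain ⟨n, c⟩ := Submodule.basisOfPid (Pi.basisFun ℤ (Fin d)) (LinearMap.range g)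
  let eB : B ≃ₗ[ℤ] LinearMap.range g := LinearEquiv.ofInjective g hg
  let b : Module.Basis (Fin n) ℤ B := c.map eB.symm
  -- n ≤ d
  have hnd : n ≤ d := by
    have h1 : Module.rank ℤ (LinearMap.range g) = n := by
      rw [rank_eq_card_basis c]; simp
    have h2 : Module.rank ℤ (LinearMap.range g) ≤ Module.rank ℤ (Fin d → ℤ) :=
      Submodule.rank_le _
    rw [h1, rank_fin_fun] at h2
    exact_mod_cast h2
  -- d ≤ n
  have hdn : d ≤ n := by
    let ψ : B →ₗ[ℤ] (A → ℝ) :=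
      { toFun := fun f x => (((f : A →+ ℤ) x : ℤ) : ℝ)
        map_add' := by intro f f'; ext x; push_cast; simp
        map_smul' := by intro c f; ext x; push_cast; simp }
    have hVle : V ≤ Submodule.span ℝ (Set.range fun i : Fin n => ψ (b i)) := by
      rw [hV]
      apply Submodule.span_le.2
      rintro x ⟨f, hf, rfl⟩
      have hrepr : (⟨f, hf⟩ : B) = ∑ i : Fin n, b.repr ⟨f, hf⟩ i • b i :=
        (Module.Basis.sum_repr b ⟨f, hf⟩).symm
      have : ψ ⟨f, hf⟩ = ∑ i : Fin n, b.repr ⟨f, hf⟩ i • ψ (b i) := by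
        conv_lhs => rw [hrepr]
        rw [map_sum]
        simp
      have hmem : ψ ⟨f, hf⟩ ∈ Submodule.span ℝ (Set.range fun i : Fin n => ψ (b i)) := by
        rw [this]
        apply Submodule.sum_mem
        intro i _
        rw [← Int.cast_smul_eq_zsmul ℝ]
        exact Submodule.smul_mem _ _ (Submodule.subset_span ⟨i, rfl⟩)
      exact hmem
    haveI := FiniteDimensional.span_of_finite ℝ (Set.finite_range fun i : Fin n => ψ (b i))
    have h1 : Module.finrank ℝ V ≤
        Module.finrank ℝ (Submodule.span ℝ (Set.range fun i : Fin n => ψ (b i))) :=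
      Submodule.finrank_mono hVle
    have h2 := finrank_range_le_card (R := ℝ) (fun i : Fin n => ψ (b i))
    rw [Fintype.card_fin] at h2
    have := h1.trans h2
    rw [hd] at this
    exact this
  have hnd' : n = d := le_antisymm hnd hdn
  exact ⟨b.equivFun.trans (LinearEquiv.funCongrLeft ℤ ℤ (finCongr hnd'.symm))⟩
end

section
/- If a group Γ admits a non-trivial quasimorphism, then Γ is not uniformly U(1)-stable: there exists δ > 0 such that for every ε > 0 there is an ε-homomorphism φ : Γ → ℝ/ℤ that is not δ-close to any homomorphism Γ → ℝ/ℤ. -/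
lemma addcircle_norm_coe_le (a : ℝ) : ‖(a : AddCircle (1 : ℝ))‖ ≤ |a| := by
  rw [AddCircle.norm_eq]
  simpa using round_le a 0

/-- If `Γ` admits a non-trivial quasimorphism `f` (a map `Γ → ℝ` with uniformly bounded
defect `|f(x) + f(y) − f(xy)|` that is not at bounded distance from any additive
homomorphism `Γ → ℝ`), then `Γ` is not uniformly `U(1)`-stable: there is `δ > 0` such that
for every `ε > 0` there is an `ε`-homomorphism `φ : Γ → ℝ/ℤ` that is not `δ`-close to any
homomorphism `Γ → ℝ/ℤ`. -/
theorem stmt_4 {Γ : Type*} [Group Γ] (f : Γ → ℝ)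
    (hq : ∃ D : ℝ, ∀ x y, |f x + f y - f (x * y)| ≤ D)
    (hnt : ¬ ∃ (h : Γ → ℝ) (B : ℝ), 0 ≤ B ∧ (∀ x y, h (x * y) = h x + h y) ∧
      ∀ x, |f x - h x| ≤ B) :
    ∃ δ > (0 : ℝ), ∀ ε > (0 : ℝ), ∃ φ : Γ → AddCircle (1 : ℝ),
      (∀ x y, ‖φ (x * y) - φ x - φ y‖ ≤ ε) ∧
      ∀ ψ : Γ → AddCircle (1 : ℝ), (∀ x y, ψ (x * y) = ψ x + ψ y) →
        ¬ ∀ x, ‖φ x - ψ x‖ ≤ δ := by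
  obtain ⟨D, hD⟩ := hq
  refine ⟨1/8, by norm_num, fun ε hε => ?_⟩
  set ε' : ℝ := min ε (1/8) with hε'def
  have hε' : 0 < ε' := lt_min hε (by norm_num)
  set M : ℝ := max D 1 with hMdef
  have hM : 0 < M := lt_of_lt_of_le one_pos (le_max_right _ _)
  set t : ℝ := ε' / M with htdef
  have ht : 0 < t := div_pos hε' hM
  refine ⟨fun x => ((t * f x : ℝ) : AddCircle (1 : ℝ)), ?_, ?_⟩
  · intro x y
    have h1 : ((t * f (x*y) : ℝ) : AddCircle (1:ℝ)) - (t * f x : ℝ) - (t * f y : ℝ)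
        = ((t * f (x*y) - t * f x - t * f y : ℝ) : AddCircle (1:ℝ)) := by
      rw [AddCircle.coe_sub, AddCircle.coe_sub]
    rw [h1]
    calc ‖((t * f (x*y) - t * f x - t * f y : ℝ) : AddCircle (1:ℝ))‖
        ≤ |t * f (x*y) - t * f x - t * f y| := addcircle_norm_coe_le _
      _ = t * |f x + f y - f (x*y)| := by
          have h2 : t * f (x*y) - t * f x - t * f y = -(t * (f x + f y - f (x*y))) := by ring
          rw [h2, abs_neg, abs_mul, abs_of_pos ht]
      _ ≤ t * M := by
          refine mul_le_mul_of_nonneg_left ?_ ht.le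
          exact le_trans (hD x y) (le_max_left _ _)
      _ = ε' := div_mul_cancel₀ _ hM.ne'
      _ ≤ ε := min_le_left _ _
  · intro ψ hψ hclose
    -- choose lifts
    have hrep : ∀ x : Γ, ∃ a : ℝ, ((a : AddCircle (1:ℝ)) = (t * f x : ℝ) - ψ x ∧ |a| = ‖(t * f x : ℝ) - ψ x‖) := by
      intro x
      obtain ⟨a0, ha0⟩ := QuotientAddGroup.mk_surjective (((t * f x : ℝ) : AddCircle (1:ℝ)) - ψ x)
      refine ⟨a0 - round a0, ?_, ?_⟩
      · rw [← ha0]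
        have h0 : ((round a0 : ℝ) : AddCircle (1:ℝ)) = 0 := by
          rw [AddCircle.coe_eq_zero_iff]; exact ⟨round a0, by simp⟩
        rw [AddCircle.coe_sub, h0, sub_zero]
      · rw [← ha0, AddCircle.norm_eq]
        simp
    choose r hr hrabs using hrep
    have hrle : ∀ x, |r x| ≤ 1/8 := fun x => (hrabs x).le.trans (hclose x)
    -- g is an additive map
    set g : Γ → ℝ := fun x => t * f x - r x with hgdef
    have hghom : ∀ x y, g (x * y) = g x + g y := by
      intro x y
      have hcoe : ((g x + g y - g (x*y) : ℝ) : AddCircle (1:ℝ)) = 0 := by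
        have hx := hr x; have hy := hr y; have hxy := hr (x*y)
        have : ((g x + g y - g (x*y) : ℝ) : AddCircle (1:ℝ))
            = ((t * f x : ℝ) : AddCircle (1:ℝ)) + (t * f y : ℝ) - (t * f (x*y) : ℝ)
              - ((r x : ℝ) : AddCircle (1:ℝ)) - (r y : ℝ) + (r (x*y) : ℝ) := by
          simp only [hgdef, AddCircle.coe_add, AddCircle.coe_sub]
          abel
        rw [this, hx, hy, hxy, hψ x y]
        abel
      obtain ⟨n, hn⟩ := (AddCircle.coe_eq_zero_iff (1:ℝ)).mp hcoe
      rw [zsmul_eq_mul, mul_one] at hn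
      have hbound : |g x + g y - g (x*y)| < 1 := by
        have h1 : |t * f x + t * f y - t * f (x*y)| ≤ 1/8 := by
          have heq : t * f x + t * f y - t * f (x*y) = t * (f x + f y - f (x*y)) := by ring
          rw [heq, abs_mul, abs_of_pos ht]
          calc t * |f x + f y - f (x*y)| ≤ t * M := by
                refine mul_le_mul_of_nonneg_left ?_ ht.le
                exact le_trans (hD x y) (le_max_left _ _)
            _ = ε' := div_mul_cancel₀ _ hM.ne'
            _ ≤ 1/8 := min_le_right _ _
        have h2 : g x + g y - g (x*y)
            = (t * f x + t * f y - t * f (x*y)) - r x - r y + r (x*y) := by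
          simp only [hgdef]; ring
        rw [h2]
        have b1 := abs_add_le (t * f x + t * f y - t * f (x*y) - r x - r y) (r (x*y))
        have b2 := abs_sub (t * f x + t * f y - t * f (x*y) - r x) (r y)
        have b3 := abs_sub (t * f x + t * f y - t * f (x*y)) (r x)
        have c1 := hrle x; have c2 := hrle y; have c3 := hrle (x*y)
        linarith
      rw [← hn] at hbound
      have hn0 : n = 0 := by
        by_contra hn0
        have : (1:ℝ) ≤ |(n:ℝ)| := by
          rw [← Int.cast_abs]; exact_mod_cast Int.one_le_abs (by omega)
        linarith
      have : g x + g y - g (x*y) = 0 := by rw [← hn, hn0]; simp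
      linarith
    -- h := g / t contradicts hnt
    apply hnt
    refine ⟨fun x => g x / t, (1/8) / t, by positivity, ?_, ?_⟩
    · intro x y
      show g (x * y) / t = g x / t + g y / t
      rw [hghom x y]; ring
    · intro x
      have : f x - g x / t = r x / t := by
        field_simp [hgdef]; ring
      rw [this, abs_div, abs_of_pos ht]
      gcongr
      exact hrle x
end

section
/- Let Γ be a group and 𝒢 a family of groups, each equipped with a bi-invariant metric that is moreover complete. Then Γ is uniformly 𝒢-stable with a linear estimate if and only if Γ has the asymptotic defect diminishing property with respect to 𝒢. -/
open scoped ENNReal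

namespace Stmt7

/-- The (uniform) defect `def(φ) = sup_{x,y} d(φ(xy), φ(x)φ(y))` of a map `φ` between groups,
valued in `[0,∞]`. -/
noncomputable def defect {Γ G : Type*} [Group Γ] [Group G] [PseudoEMetricSpace G]
    (φ : Γ → G) : ℝ≥0∞ :=
  ⨆ x : Γ, ⨆ y : Γ, edist (φ (x * y)) (φ x * φ y)

/-- The homomorphism distance `D(φ) = inf_{ψ ∈ Hom(Γ,G)} sup_x d(φ(x), ψ(x))`,
valued in `[0,∞]`. -/
noncomputable def homDist {Γ G : Type*} [Group Γ] [Group G] [PseudoEMetricSpace G]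
    (φ : Γ → G) : ℝ≥0∞ :=
  ⨅ ψ : Γ →* G, ⨆ x : Γ, edist (φ x) (ψ x)

/-- `Γ` is uniformly stable with a linear estimate with respect to the family `(G i)`. -/
noncomputable def UnifStableLinear (Γ : Type*) [Group Γ] {ι : Type*} (G : ι → Type*)
    [∀ i, Group (G i)] [∀ i, MetricSpace (G i)] : Prop :=
  ∃ ε₀ > (0 : ℝ), ∃ M ≥ (0 : ℝ), ∀ ε : ℝ, ε < ε₀ → ∀ i, ∀ φ : Γ → G i,
    defect φ ≤ ENNReal.ofReal ε → homDist φ ≤ ENNReal.ofReal (M * ε)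

/-- `Γ` has the asymptotic defect diminishing property with respect to the family `(G i)`. -/
def AsympDefectDiminishing (Γ : Type*) [Group Γ] {ι : Type*} (G : ι → Type*)
    [∀ i, Group (G i)] [∀ i, MetricSpace (G i)] : Prop :=
  ∀ (idx : ℕ → ι) (φ : ∀ n, Γ → G (idx n)),
    Filter.Tendsto (fun n => defect (φ n)) Filter.atTop (nhds 0) →
    ∃ (ψ : ∀ n, Γ → G (idx n)) (ε : ℕ → ℝ) (C : ℝ),
      (∀ n, 0 ≤ ε n) ∧ Filter.Tendsto ε Filter.atTop (nhds 0) ∧ 0 ≤ C ∧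
      (∀ n, defect (ψ n) ≤ ENNReal.ofReal (ε n) * defect (φ n)) ∧
      (∀ n, (⨆ x : Γ, edist (φ n x) (ψ n x)) ≤ ENNReal.ofReal C * defect (φ n))

end Stmt7

open Stmt7

namespace Stmt7Aux

open Filter

variable {Γ : Type*} [Group Γ] {ι : Type*} {G : ι → Type*}
  [∀ i, Group (G i)] [∀ i, MetricSpace (G i)]

lemma edist_le_defect {i : ι} (φ : Γ → G i) (x y : Γ) :
    edist (φ (x * y)) (φ x * φ y) ≤ Stmt7.defect φ :=
  le_trans (le_iSup (fun y => edist (φ (x * y)) (φ x * φ y)) y)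
    (le_iSup (fun x => ⨆ y, edist (φ (x * y)) (φ x * φ y)) x)

lemma defect_le {i : ι} (φ : Γ → G i) {c : ℝ≥0∞}
    (h : ∀ x y, edist (φ (x * y)) (φ x * φ y) ≤ c) : Stmt7.defect φ ≤ c :=
  iSup_le fun x => iSup_le fun y => h x y

lemma defect_hom {i : ι} (ψ : Γ →* G i) : Stmt7.defect (ψ : Γ → G i) = 0 :=
  le_antisymm (defect_le _ fun x y => by simp) zero_le

lemma edist_mul {i : ι}
    (hbi : ∀ g x y : G i, dist (g * x) (g * y) = dist x y ∧ dist (x * g) (y * g) = dist x y)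
    (a b c d : G i) : edist (a * b) (c * d) ≤ edist a c + edist b d := by
  have h1 : dist (a * b) (c * d) ≤ dist a c + dist b d := by
    calc dist (a * b) (c * d) ≤ dist (a * b) (c * b) + dist (c * b) (c * d) :=
          dist_triangle _ _ _
    _ = dist a c + dist b d := by rw [(hbi b a c).2, (hbi c b d).1]
  calc edist (a * b) (c * d) = ENNReal.ofReal (dist (a * b) (c * d)) := edist_dist _ _
  _ ≤ ENNReal.ofReal (dist a c + dist b d) := ENNReal.ofReal_le_ofReal h1
  _ ≤ ENNReal.ofReal (dist a c) + ENNReal.ofReal (dist b d) := ENNReal.ofReal_add_le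
  _ = edist a c + edist b d := by rw [edist_dist, edist_dist]

/-- The key claim extracted from asymptotic defect diminishing. -/
lemma key (hadd : Stmt7.AsympDefectDiminishing Γ G) :
    ∃ ε₀ > (0 : ℝ), ∃ C ≥ (0 : ℝ), ∀ i, ∀ φ : Γ → G i,
      Stmt7.defect φ ≤ ENNReal.ofReal ε₀ →
      ∃ ψ : Γ → G i, Stmt7.defect ψ ≤ 2⁻¹ * Stmt7.defect φ ∧
        (⨆ x, edist (φ x) (ψ x)) ≤ ENNReal.ofReal C * Stmt7.defect φ := by
  by_contra hcon
  push_neg at hcon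
  have hc : ∀ n : ℕ, ∃ i, ∃ φ : Γ → G i,
      Stmt7.defect φ ≤ ENNReal.ofReal (1 / (n + 1 : ℝ)) ∧
      ∀ ψ : Γ → G i, Stmt7.defect ψ ≤ 2⁻¹ * Stmt7.defect φ →
        ENNReal.ofReal (n : ℝ) * Stmt7.defect φ < ⨆ x, edist (φ x) (ψ x) := by
    intro n
    obtain ⟨i, φ, h1, h2⟩ := hcon (1 / (n + 1 : ℝ)) (by positivity) (n : ℝ) (Nat.cast_nonneg n)
    exact ⟨i, φ, h1, h2⟩
  choose idx φ h1 h2 using hc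
  have htend : Tendsto (fun n => Stmt7.defect (φ n)) atTop (nhds 0) := by
    have hu : Tendsto (fun n : ℕ => ENNReal.ofReal (1 / (n + 1 : ℝ))) atTop (nhds 0) := by
      have := ENNReal.tendsto_ofReal (tendsto_one_div_add_atTop_nhds_zero_nat)
      simpa using this
    exact tendsto_of_tendsto_of_tendsto_of_le_of_le tendsto_const_nhds hu
      (fun n => zero_le) h1
  obtain ⟨ψ, ε, C, hε0, hεtend, hC0, hdef, hdist⟩ := hadd idx φ htend
  have hev : ∀ᶠ n : ℕ in atTop, ε n < 1 / 2 ∧ C ≤ (n : ℝ) := by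
    refine (hεtend.eventually_lt_const (by norm_num)).and ?_
    obtain ⟨N, hN⟩ := exists_nat_ge C
    filter_upwards [eventually_ge_atTop N] with n hn
    exact hN.trans (by exact_mod_cast hn)
  obtain ⟨n, hn1, hn2⟩ := hev.exists
  have hhalf : ENNReal.ofReal (ε n) ≤ 2⁻¹ := by
    have : ENNReal.ofReal (ε n) ≤ ENNReal.ofReal (1 / 2) :=
      ENNReal.ofReal_le_ofReal hn1.le
    calc ENNReal.ofReal (ε n) ≤ ENNReal.ofReal (1 / 2) := this
    _ = 2⁻¹ := by rw [ENNReal.ofReal_div_of_pos (by norm_num)]; norm_num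
  have hψdef : Stmt7.defect (ψ n) ≤ 2⁻¹ * Stmt7.defect (φ n) :=
    (hdef n).trans (mul_le_mul_left hhalf _)
  have hlt := h2 n (ψ n) hψdef
  have hge : (⨆ x, edist (φ n x) (ψ n x)) ≤ ENNReal.ofReal (n : ℝ) * Stmt7.defect (φ n) :=
    (hdist n).trans (mul_le_mul_left (ENNReal.ofReal_le_ofReal hn2) _)
  exact absurd (hlt.trans_le hge) (lt_irrefl _)

end Stmt7Aux

/-- For a family `𝒢` of groups with *complete* bi-invariant metrics, `Γ` is uniformly
`𝒢`-stable with a linear estimate if and only if `Γ` has the asymptotic defect diminishing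
property with respect to `𝒢`. -/
theorem stmt_7 {Γ : Type*} [Group Γ] {ι : Type*} (G : ι → Type*)
    [∀ i, Group (G i)] [∀ i, MetricSpace (G i)] [∀ i, CompleteSpace (G i)]
    (hbi : ∀ i, ∀ g x y : G i,
      dist (g * x) (g * y) = dist x y ∧ dist (x * g) (y * g) = dist x y) :
    UnifStableLinear Γ G ↔ AsympDefectDiminishing Γ G := by
  constructor
  · -- stability → ADD
    rintro ⟨ε₀, hε₀, M, hM, hst⟩
    intro idx φ hφ
    have hev : ∀ᶠ n : ℕ in Filter.atTop,
        Stmt7.defect (φ n) ≤ ENNReal.ofReal (ε₀ / 2) := by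
      have := hφ.eventually_lt_const
        (show (0 : ℝ≥0∞) < ENNReal.ofReal (ε₀ / 2) by
          simp [ENNReal.ofReal_pos]; linarith)
      filter_upwards [this] with n hn using hn.le
    obtain ⟨N, hN⟩ := Filter.eventually_atTop.mp hev
    have hP : ∀ n, N ≤ n → ∃ ψ : Γ → G (idx n), Stmt7.defect ψ = 0 ∧
        (⨆ x, edist (φ n x) (ψ x)) ≤ ENNReal.ofReal (M + 1) * Stmt7.defect (φ n) := by
      intro n hn
      rcases eq_or_ne (Stmt7.defect (φ n)) 0 with h0 | h0
      · exact ⟨φ n, h0, by simp⟩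
      · have hle := hN n hn
        have hfin : Stmt7.defect (φ n) ≠ ⊤ :=
          (hle.trans_lt ENNReal.ofReal_lt_top).ne
        set D := Stmt7.defect (φ n) with hD
        set d := D.toReal with hd
        have hdpos : 0 < d := ENNReal.toReal_pos h0 hfin
        have hDd : D = ENNReal.ofReal d := (ENNReal.ofReal_toReal hfin).symm
        have hdlt : d < ε₀ := by
          have : d ≤ ε₀ / 2 := ENNReal.toReal_le_of_le_ofReal (by linarith) hle
          linarith
        have hhd := hst d hdlt (idx n) (φ n) (hDd ▸ le_refl D)
        have hlt2 : Stmt7.homDist (φ n) < ENNReal.ofReal (M * d) + D :=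
          lt_of_le_of_lt hhd (ENNReal.lt_add_right ENNReal.ofReal_ne_top h0)
        rw [Stmt7.homDist, iInf_lt_iff] at hlt2
        obtain ⟨ψh, hψh⟩ := hlt2
        refine ⟨(ψh : Γ → G (idx n)), Stmt7Aux.defect_hom ψh, ?_⟩
        have : ENNReal.ofReal (M * d) + D ≤ ENNReal.ofReal (M + 1) * D := by
          rw [hDd, ← ENNReal.ofReal_add (by positivity) hdpos.le,
            ← ENNReal.ofReal_mul (by linarith : (0:ℝ) ≤ M + 1)]
          exact ENNReal.ofReal_le_ofReal (le_of_eq (by ring))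
        exact hψh.le.trans this
    classical
    refine ⟨fun n => if hn : N ≤ n then Classical.choose (hP n hn) else φ n,
      fun n => if N ≤ n then 0 else 1, M + 1, ?_, ?_, by linarith, ?_, ?_⟩
    · intro n; dsimp only; split <;> norm_num
    · apply Filter.Tendsto.congr' _ tendsto_const_nhds
      filter_upwards [Filter.eventually_ge_atTop N] with n hn
      simp [hn]
    · intro n; dsimp only; split
      · next hn => rw [(Classical.choose_spec (hP n hn)).1]; exact zero_le
      · next hn => simp [hn]
    · intro n; dsimp only; split
      · next hn => exact (Classical.choose_spec (hP n hn)).2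
      · next hn => simp
  · -- ADD → stability
    intro hadd
    obtain ⟨ε₀, hε₀, C, hC0, hkey⟩ := Stmt7Aux.key hadd
    refine ⟨ε₀, hε₀, 2 * C, by linarith, ?_⟩
    intro ε hε i φ hφ
    classical
    set D := Stmt7.defect φ with hD
    have hDε : D ≤ ENNReal.ofReal ε := hφ
    have hDε₀ : D ≤ ENNReal.ofReal ε₀ := hDε.trans (ENNReal.ofReal_le_ofReal hε.le)
    have hDfin : D ≠ ⊤ := (hDε.trans_lt ENNReal.ofReal_lt_top).ne
    -- the iteration step
    let step : (Γ → G i) → (Γ → G i) := fun χ =>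
      if h : Stmt7.defect χ ≤ ENNReal.ofReal ε₀ then Classical.choose (hkey i χ h) else χ
    let seq : ℕ → Γ → G i := fun k => step^[k] φ
    have hseq0 : seq 0 = φ := rfl
    have hseqS : ∀ k, seq (k + 1) = step (seq k) := fun k =>
      Function.iterate_succ_apply' step k φ
    -- invariants
    have hinv : ∀ k, Stmt7.defect (seq k) ≤ 2⁻¹ ^ k * D ∧
        (⨆ x, edist (seq k x) (seq (k + 1) x)) ≤ ENNReal.ofReal C * (2⁻¹ ^ k * D) := by
      have main : ∀ k, Stmt7.defect (seq k) ≤ 2⁻¹ ^ k * D → Stmt7.defect (seq (k+1)) ≤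
          2⁻¹ ^ (k+1) * D ∧
          (⨆ x, edist (seq k x) (seq (k + 1) x)) ≤ ENNReal.ofReal C * (2⁻¹ ^ k * D) := by
        intro k hk
        have hkε₀ : Stmt7.defect (seq k) ≤ ENNReal.ofReal ε₀ := by
          refine hk.trans (le_trans ?_ hDε₀)
          calc 2⁻¹ ^ k * D ≤ 1 * D := by
                gcongr
                exact pow_le_one' (by norm_num) k
          _ = D := one_mul D
        have hstep : seq (k+1) = Classical.choose (hkey i (seq k) hkε₀) := by
          rw [hseqS k]; simp only [step, dif_pos hkε₀]
        obtain ⟨hs1, hs2⟩ := Classical.choose_spec (hkey i (seq k) hkε₀)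
        constructor
        · rw [hstep]
          refine hs1.trans ?_
          rw [pow_succ, mul_comm (2⁻¹ ^ k) _, mul_assoc]
          exact mul_le_mul_right hk _
        · rw [hstep]
          exact hs2.trans (mul_le_mul_right hk _)
      intro k
      have h00 : Stmt7.defect (seq 0) ≤ 2⁻¹ ^ 0 * D := by
        rw [pow_zero, one_mul, hseq0]
      induction k with
      | zero => exact ⟨h00, (main 0 h00).2⟩
      | succ k ih => exact ⟨(main k ih.1).1, (main (k+1) (main k ih.1).1).2⟩
    -- distances
    have hd : ∀ k x, edist (seq k x) (seq (k + 1) x) ≤ ENNReal.ofReal C * 2⁻¹ ^ k * D := by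
      intro k x
      have := le_iSup (fun x => edist (seq k x) (seq (k + 1) x)) x
      refine this.trans ((hinv k).2.trans ?_)
      rw [mul_assoc]
    -- the geometric bound sequence
    set dk : ℕ → ℝ≥0∞ := fun k => ENNReal.ofReal C * 2⁻¹ ^ k * D with hdk
    have htsum : ∑' k, dk k = ENNReal.ofReal C * D * 2 := by
      rw [hdk]
      calc ∑' k, ENNReal.ofReal C * 2⁻¹ ^ k * D
          = ∑' k, (ENNReal.ofReal C * D) * 2⁻¹ ^ k := by
            congr 1; funext k; ring
      _ = (ENNReal.ofReal C * D) * ∑' k, (2⁻¹ : ℝ≥0∞) ^ k := ENNReal.tsum_mul_left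
      _ = ENNReal.ofReal C * D * 2 := by
            rw [ENNReal.tsum_geometric, ENNReal.one_sub_inv_two, inv_inv]
    have htsum_ne : ∑' k, dk k ≠ ⊤ := by
      rw [htsum]
      exact ENNReal.mul_ne_top (ENNReal.mul_ne_top ENNReal.ofReal_ne_top hDfin)
        (by norm_num)
    -- convergence
    have hcauchy : ∀ x : Γ, CauchySeq (fun k => seq k x) := fun x =>
      cauchySeq_of_edist_le_of_tsum_ne_top dk (fun k => hd k x) htsum_ne
    choose L hL using fun x => cauchySeq_tendsto_of_complete (hcauchy x)
    -- tail bound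
    have htail : ∀ k x, edist (seq k x) (L x) ≤ 2⁻¹ ^ k * (ENNReal.ofReal C * D * 2) := by
      intro k x
      have hb := edist_le_tsum_of_edist_le_of_tendsto dk (fun m => hd m x) (hL x) k
      have hsh : ∀ m, dk (k + m) = 2⁻¹ ^ k * dk m := by
        intro m
        rw [hdk]; dsimp only; rw [pow_add]; ring
      have heq : ∑' m, dk (k + m) = 2⁻¹ ^ k * (ENNReal.ofReal C * D * 2) := by
        calc ∑' m, dk (k + m) = ∑' m, 2⁻¹ ^ k * dk m := by
              congr 1; funext m; exact hsh m
        _ = 2⁻¹ ^ k * ∑' m, dk m := ENNReal.tsum_mul_left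
        _ = 2⁻¹ ^ k * (ENNReal.ofReal C * D * 2) := by rw [htsum]
      exact hb.trans (le_of_eq heq)
    -- L is a homomorphism
    have hmul : ∀ x y : Γ, L (x * y) = L x * L y := by
      intro x y
      have hzero : edist (L (x * y)) (L x * L y) = 0 := by
        set K : ℝ≥0∞ := 3 * (ENNReal.ofReal C * D * 2) + D with hK
        have hbound : ∀ k, edist (L (x * y)) (L x * L y) ≤ 2⁻¹ ^ k * K := by
          intro k
          have h1 : edist (L (x * y)) (seq k (x * y)) ≤
              2⁻¹ ^ k * (ENNReal.ofReal C * D * 2) := by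
            rw [edist_comm]; exact htail k (x * y)
          have h2 : edist (seq k (x * y)) (seq k x * seq k y) ≤ 2⁻¹ ^ k * D :=
            (Stmt7Aux.edist_le_defect (seq k) x y).trans (hinv k).1
          have h3 : edist (seq k x * seq k y) (L x * L y) ≤
              2⁻¹ ^ k * (ENNReal.ofReal C * D * 2) + 2⁻¹ ^ k * (ENNReal.ofReal C * D * 2) :=
            (Stmt7Aux.edist_mul (hbi i) _ _ _ _).trans
              (add_le_add (htail k x) (htail k y))
          calc edist (L (x * y)) (L x * L y)
              ≤ edist (L (x * y)) (seq k (x * y)) + edist (seq k (x * y)) (seq k x * seq k y)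
                + edist (seq k x * seq k y) (L x * L y) := edist_triangle4 _ _ _ _
          _ ≤ 2⁻¹ ^ k * (ENNReal.ofReal C * D * 2) + 2⁻¹ ^ k * D +
                (2⁻¹ ^ k * (ENNReal.ofReal C * D * 2) + 2⁻¹ ^ k * (ENNReal.ofReal C * D * 2)) :=
            add_le_add (add_le_add h1 h2) h3
          _ = 2⁻¹ ^ k * K := by rw [hK]; ring
        have hKne : K ≠ ⊤ := by
          rw [hK]
          refine ENNReal.add_ne_top.mpr ⟨?_, hDfin⟩
          exact ENNReal.mul_ne_top (by norm_num)
            (ENNReal.mul_ne_top (ENNReal.mul_ne_top ENNReal.ofReal_ne_top hDfin) (by norm_num))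
        have htend0 : Filter.Tendsto (fun k : ℕ => 2⁻¹ ^ k * K) Filter.atTop (nhds 0) := by
          have := ENNReal.Tendsto.mul_const (ENNReal.tendsto_pow_atTop_nhds_zero_of_lt_one
            (by norm_num : (2⁻¹ : ℝ≥0∞) < 1)) (b := K) (Or.inr hKne)
          simpa using this
        exact le_antisymm (ge_of_tendsto' htend0 hbound) zero_le
      exact edist_eq_zero.mp hzero
    -- conclude
    have hfinal : (⨆ x, edist (φ x) (L x)) ≤ ENNReal.ofReal (2 * C * ε) := by
      refine iSup_le fun x => ?_
      have h0 : edist (φ x) (L x) ≤ ENNReal.ofReal C * D * 2 := by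
        have := htail 0 x
        simpa [hseq0] using this
      refine h0.trans ?_
      calc ENNReal.ofReal C * D * 2 ≤ ENNReal.ofReal C * ENNReal.ofReal ε * 2 := by gcongr
      _ = ENNReal.ofReal (2 * C) * ENNReal.ofReal ε := by
            rw [ENNReal.ofReal_mul (by norm_num : (0:ℝ) ≤ 2)]
            simp [ENNReal.ofReal_ofNat]
            ring
      _ = ENNReal.ofReal (2 * C * ε) := by
            rw [ENNReal.ofReal_mul (by linarith : (0:ℝ) ≤ 2 * C)]
    calc Stmt7.homDist φ ≤ ⨆ x, edist (φ x) ((MonoidHom.mk' L hmul) x) :=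
          iInf_le _ (MonoidHom.mk' L hmul)
    _ = ⨆ x, edist (φ x) (L x) := rfl
    _ ≤ ENNReal.ofReal (2 * C * ε) := hfinal
end

section
/- Let Γ be a (discrete) group. Suppose that for every real Banach space E: (i) every bounded 2-cocycle α : Γ² → E* is equal to δ¹β for some bounded β : Γ → E*, and (ii) the set {δ²α : α a bounded function Γ² → E*} is closed in the sup-norm Banach space of bounded functions Γ³ → E*. Then: (a) there exists C₁ > 0 such that for every real Banach space E and every bounded 2-cocycle α : Γ² → E* there is a bounded β : Γ → E* with δ¹β = α and sup_g ‖β(g)‖ ≤ C₁ · sup_{g,h} ‖α(g,h)‖; and (b) there exists C₂ > 0 such that for every real Banach space E and every bounded function α : Γ² → E* there is a bounded 2-cocycle α' : Γ² → E* with sup_{g,h} ‖α(g,h) − α'(g,h)‖ ≤ C₂ · sup_{g,h,k} ‖δ²α(g,h,k)‖. -/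
namespace Stmt13

variable {Γ : Type*} [Group Γ]

/-- Inhomogeneous differential `δ¹β(g,h) = β(g) + β(h) − β(gh)` (trivial action). -/
def d1 {V : Type*} [AddCommGroup V] (β : Γ → V) (g h : Γ) : V := β g + β h - β (g * h)

/-- Inhomogeneous differential `δ²α(g,h,k) = α(h,k) − α(gh,k) + α(g,hk) − α(g,h)`
(trivial action). -/
def d2 {V : Type*} [AddCommGroup V] (α : Γ → Γ → V) (g h k : Γ) : V :=
  α h k - α (g * h) k + α g (h * k) - α g h

end Stmt13

open Stmt13


open scoped ENNReal

set_option linter.unusedSectionVars false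

namespace Aux13

noncomputable section

instance factOne : Fact ((1:ℝ≥0∞) ≤ 1) := ⟨le_rfl⟩

lemma norm_comb_le {V : Type*} [SeminormedAddGroup V] (a b c d : V) :
    ‖a - b + c - d‖ ≤ ‖a‖ + ‖b‖ + ‖c‖ + ‖d‖ := by
  have h1 : ‖a - b + c - d‖ ≤ ‖a - b + c‖ + ‖d‖ := norm_sub_le _ _
  have h2 : ‖a - b + c‖ ≤ ‖a - b‖ + ‖c‖ := norm_add_le _ _
  have h3 : ‖a - b‖ ≤ ‖a‖ + ‖b‖ := norm_sub_le _ _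
  linarith

lemma norm_smul_le_of_le {F : Type*} [SeminormedAddCommGroup F] [NormedSpace ℝ F] {c : ℝ}
    (hc : 0 ≤ c) {x : F} {C : ℝ} (h : ‖x‖ ≤ C) : ‖c • x‖ ≤ c * C := by
  refine (norm_smul_le c x).trans ?_
  rw [Real.norm_eq_abs, abs_of_nonneg hc]
  exact mul_le_mul_of_nonneg_left h hc

section DGen

variable {Γ : Type*} [Group Γ] {V : Type*} [AddCommGroup V] [Module ℝ V]

lemma d1_smul (c : ℝ) (β : Γ → V) (g h : Γ) :
    d1 (fun g => c • β g) g h = c • d1 β g h := by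
  simp [d1, smul_add, smul_sub]

lemma d2_smul (c : ℝ) (f : Γ → Γ → V) (g h k : Γ) :
    d2 (fun g h => c • f g h) g h k = c • d2 f g h k := by
  simp [d2, smul_add, smul_sub]

lemma d2_sub (f f' : Γ → Γ → V) (g h k : Γ) :
    d2 (fun g h => f g h - f' g h) g h k = d2 f g h k - d2 f' g h k := by
  simp only [d2]; abel

end DGen

section Comp

variable {Γ : Type*} [Group Γ] {F G : Type*} [NormedAddCommGroup F] [NormedSpace ℝ F]
  [NormedAddCommGroup G] [NormedSpace ℝ G]

lemma d1_comp (β : Γ → (F →L[ℝ] ℝ)) (s : G →L[ℝ] F) (g h : Γ) :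
    d1 (fun g => (β g).comp s) g h = (d1 β g h).comp s := by
  simp [d1, ContinuousLinearMap.add_comp, ContinuousLinearMap.sub_comp]

lemma d2_comp (α : Γ → Γ → (F →L[ℝ] ℝ)) (s : G →L[ℝ] F) (g h k : Γ) :
    d2 (fun g h => (α g h).comp s) g h k = (d2 α g h k).comp s := by
  simp [d2, ContinuousLinearMap.add_comp, ContinuousLinearMap.sub_comp]

end Comp

variable {E : ℕ → Type} [∀ n, NormedAddCommGroup (E n)] [∀ n, NormedSpace ℝ (E n)]

lemma toReal_one_pos : (0:ℝ) < (1:ℝ≥0∞).toReal := by norm_num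

lemma summable_norm_lp (x : lp E 1) : Summable fun n => ‖x n‖ := by
  have h := (lp.memℓp x).summable toReal_one_pos
  simpa using h

lemma norm_lp_eq (x : lp E 1) : ‖x‖ = ∑' n, ‖x n‖ := by
  have h := lp.hasSum_norm toReal_one_pos x
  simpa using h.tsum_eq.symm

lemma bound_nonneg {φ : ∀ n, E n →L[ℝ] ℝ} {C : ℝ} (hC : ∀ n, ‖φ n‖ ≤ C) : 0 ≤ C :=
  (norm_nonneg (φ 0)).trans (hC 0)

lemma summable_norm_apply (φ : ∀ n, E n →L[ℝ] ℝ) (hφ : ∃ C, ∀ n, ‖φ n‖ ≤ C) (x : lp E 1) :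
    Summable fun n => ‖φ n (x n)‖ := by
  obtain ⟨C, hC⟩ := hφ
  refine Summable.of_nonneg_of_le (fun n => norm_nonneg _)
    (fun n => ?_) ((summable_norm_lp x).mul_left C)
  exact ((φ n).le_opNorm (x n)).trans (mul_le_mul_of_nonneg_right (hC n) (norm_nonneg _))

lemma summable_apply (φ : ∀ n, E n →L[ℝ] ℝ) (hφ : ∃ C, ∀ n, ‖φ n‖ ≤ C) (x : lp E 1) :
    Summable fun n => φ n (x n) :=
  (summable_norm_apply φ hφ x).of_norm

lemma tsum_bound (φ : ∀ n, E n →L[ℝ] ℝ) (hφ : ∃ C, ∀ n, ‖φ n‖ ≤ C) {C : ℝ}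
    (hC : ∀ n, ‖φ n‖ ≤ C) (x : lp E 1) : ‖∑' n, φ n (x n)‖ ≤ C * ‖x‖ :=
  calc ‖∑' n, φ n (x n)‖ ≤ ∑' n, ‖φ n (x n)‖ :=
        norm_tsum_le_tsum_norm (summable_norm_apply φ hφ x)
    _ ≤ ∑' n, C * ‖x n‖ := by
        refine Summable.tsum_le_tsum (fun n => ?_)
          (summable_norm_apply φ hφ x) ((summable_norm_lp x).mul_left _)
        exact ((φ n).le_opNorm (x n)).trans
          (mul_le_mul_of_nonneg_right (hC n) (norm_nonneg _))
    _ = C * ‖x‖ := by rw [norm_lp_eq, tsum_mul_left]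

/-- The pairing `⟨φ, x⟩ = ∑ φₙ(xₙ)` as a continuous linear functional on `ℓ¹(E)`. -/
def pairing (φ : ∀ n, E n →L[ℝ] ℝ) (hφ : ∃ C, ∀ n, ‖φ n‖ ≤ C) : lp E 1 →L[ℝ] ℝ :=
  LinearMap.mkContinuous
    { toFun := fun x => ∑' n, φ n (x n)
      map_add' := fun x y => by
        have hx := summable_apply φ hφ x
        have hy := summable_apply φ hφ y
        have key : (fun n => φ n ((x + y : lp E 1) n)) =
            fun n => φ n (x n) + φ n (y n) := by
          funext n; rw [lp.coeFn_add, Pi.add_apply, map_add]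
        simp only [key]
        exact Summable.tsum_add hx hy
      map_smul' := fun c x => by
        have key : (fun n => φ n ((c • x : lp E 1) n)) =
            fun n => c * φ n (x n) := by
          funext n; rw [lp.coeFn_smul, Pi.smul_apply, map_smul, smul_eq_mul]
        simp only [RingHom.id_apply, key, smul_eq_mul]
        exact tsum_mul_left }
    hφ.choose
    (fun x => tsum_bound φ hφ hφ.choose_spec x)

lemma pairing_apply (φ : ∀ n, E n →L[ℝ] ℝ) (hφ) (x : lp E 1) :
    pairing φ hφ x = ∑' n, φ n (x n) := rfl

lemma pairing_norm_le (φ : ∀ n, E n →L[ℝ] ℝ) (hφ) {C : ℝ} (hC : ∀ n, ‖φ n‖ ≤ C) :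
    ‖pairing φ hφ‖ ≤ C :=
  ContinuousLinearMap.opNorm_le_bound _ (bound_nonneg hC) fun x => tsum_bound φ hφ hC x

lemma pairing_sub (φ ψ : ∀ n, E n →L[ℝ] ℝ) (hφ hψ hs) :
    pairing (fun n => φ n - ψ n) hs = pairing φ hφ - pairing ψ hψ := by
  ext x
  simp only [pairing_apply, ContinuousLinearMap.sub_apply]
  rw [← Summable.tsum_sub (summable_apply φ hφ x) (summable_apply ψ hψ x)]

/-- The inclusion of a factor into `ℓ¹(E)`, as a continuous linear map. -/
def singleCLM (n : ℕ) : E n →L[ℝ] lp E 1 :=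
  LinearMap.mkContinuous
    { toFun := fun a => lp.single 1 n a
      map_add' := fun a b => by
        ext j
        by_cases h : j = n
        · subst h; simp [lp.single_apply_self]
        · simp [lp.single_apply_ne _ _ _ h, lp.coeFn_add]
      map_smul' := fun c a => by simp }
    1
    (fun a => by
      rw [one_mul]
      have : a = (Pi.single n a : ∀ m, E m) n := by simp
      refine le_of_eq ?_
      calc ‖lp.single 1 n a‖ = ‖lp.single 1 n ((Pi.single n a : ∀ m, E m) n)‖ := by
            rw [← this]
        _ = ‖(Pi.single n a : ∀ m, E m) n‖ := lp.norm_single zero_lt_one n _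
        _ = ‖a‖ := by rw [← this])

lemma singleCLM_apply (n : ℕ) (a : E n) : singleCLM n a = lp.single 1 n a := rfl

lemma norm_singleCLM_le (n : ℕ) : ‖(singleCLM (E := E) n)‖ ≤ 1 :=
  LinearMap.mkContinuous_norm_le _ zero_le_one _

lemma pairing_comp_single (φ : ∀ n, E n →L[ℝ] ℝ) (hφ) (n : ℕ) :
    (pairing φ hφ).comp (singleCLM n) = φ n := by
  ext a
  simp only [ContinuousLinearMap.comp_apply, singleCLM_apply, pairing_apply]
  rw [tsum_eq_single n]
  · rw [lp.single_apply_self]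
  · intro m hm
    rw [lp.single_apply_ne _ _ _ hm, map_zero]

lemma norm_comp_single_le (Φ : lp E 1 →L[ℝ] ℝ) {C : ℝ} (hC : ‖Φ‖ ≤ C) (n : ℕ) :
    ‖Φ.comp (singleCLM n)‖ ≤ C := by
  have h0 : (0:ℝ) ≤ C := (norm_nonneg Φ).trans hC
  calc ‖Φ.comp (singleCLM n)‖ ≤ ‖Φ‖ * ‖(singleCLM (E := E) n)‖ :=
        ContinuousLinearMap.opNorm_comp_le _ _
    _ ≤ C * 1 := mul_le_mul hC (norm_singleCLM_le n) (norm_nonneg _) h0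
    _ = C := mul_one C

lemma d2_pairing {Γ : Type*} [Group Γ] (A : Γ → Γ → ∀ n, E n →L[ℝ] ℝ)
    (hA : ∀ g h, ∃ C, ∀ n, ‖A g h n‖ ≤ C)
    (hd : ∀ g h k, ∃ C, ∀ n, ‖d2 (fun g' h' => A g' h' n) g h k‖ ≤ C) (g h k : Γ) :
    d2 (fun g h => pairing (A g h) (hA g h)) g h k
      = pairing (fun n => d2 (fun g' h' => A g' h' n) g h k) (hd g h k) := by
  ext x
  have s1 := summable_apply (A h k) (hA h k) x
  have s2 := summable_apply (A (g*h) k) (hA (g*h) k) x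
  have s3 := summable_apply (A g (h*k)) (hA g (h*k)) x
  have s4 := summable_apply (A g h) (hA g h) x
  simp only [d2, ContinuousLinearMap.sub_apply, ContinuousLinearMap.add_apply, pairing_apply]
  rw [← Summable.tsum_sub s1 s2, ← Summable.tsum_add (s1.sub s2) s3, ← Summable.tsum_sub ((s1.sub s2).add s3) s4]

end

end Aux13

set_option maxHeartbeats 1600000 in

/-- Suppose that for every real Banach space `E`, (i) every bounded 2-cocycle of `Γ` with
coefficients in the dual `E* = E →L[ℝ] ℝ` (trivial action) is the coboundary of a bounded
1-cochain (`H_b²(Γ, E*) = 0`), and (ii) the set of coboundaries `δ²α` of bounded 2-cochains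
is closed under uniform limits in the space of bounded functions `Γ³ → E*`
(`H_b³(Γ, E*)` is Hausdorff).  Then there are universal constants: (a) `C₁ > 0` such that
every bounded 2-cocycle `α` is `δ¹β` for some `β` with `sup‖β‖ ≤ C₁·sup‖α‖`; and
(b) `C₂ > 0` such that every bounded 2-cochain `α` is within `C₂·sup‖δ²α‖` of a bounded
2-cocycle `α'`. -/
theorem stmt_13 {Γ : Type*} [Group Γ]
    (hvanish : ∀ (E : Type) [NormedAddCommGroup E] [NormedSpace ℝ E] [CompleteSpace E],
      ∀ α : Γ → Γ → (E →L[ℝ] ℝ), (∃ C : ℝ, ∀ g h, ‖α g h‖ ≤ C) →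
        (∀ g h k, d2 α g h k = 0) →
        ∃ β : Γ → (E →L[ℝ] ℝ), (∃ C : ℝ, ∀ g, ‖β g‖ ≤ C) ∧ ∀ g h, d1 β g h = α g h)
    (hhaus : ∀ (E : Type) [NormedAddCommGroup E] [NormedSpace ℝ E] [CompleteSpace E],
      ∀ γ : Γ → Γ → Γ → (E →L[ℝ] ℝ), (∃ C : ℝ, ∀ g h k, ‖γ g h k‖ ≤ C) →
        (∀ ε > (0 : ℝ), ∃ α : Γ → Γ → (E →L[ℝ] ℝ), (∃ C : ℝ, ∀ g h, ‖α g h‖ ≤ C) ∧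
          ∀ g h k, ‖γ g h k - d2 α g h k‖ ≤ ε) →
        ∃ α : Γ → Γ → (E →L[ℝ] ℝ), (∃ C : ℝ, ∀ g h, ‖α g h‖ ≤ C) ∧
          ∀ g h k, d2 α g h k = γ g h k) :
    (∃ C₁ > (0 : ℝ), ∀ (E : Type) [NormedAddCommGroup E] [NormedSpace ℝ E] [CompleteSpace E],
      ∀ α : Γ → Γ → (E →L[ℝ] ℝ), (∃ C : ℝ, ∀ g h, ‖α g h‖ ≤ C) →
        (∀ g h k, d2 α g h k = 0) →
        ∃ β : Γ → (E →L[ℝ] ℝ), (∀ g h, d1 β g h = α g h) ∧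
          ∀ D : ℝ, (∀ g h, ‖α g h‖ ≤ D) → ∀ g, ‖β g‖ ≤ C₁ * D) ∧
    (∃ C₂ > (0 : ℝ), ∀ (E : Type) [NormedAddCommGroup E] [NormedSpace ℝ E] [CompleteSpace E],
      ∀ α : Γ → Γ → (E →L[ℝ] ℝ), (∃ C : ℝ, ∀ g h, ‖α g h‖ ≤ C) →
        ∃ α' : Γ → Γ → (E →L[ℝ] ℝ), (∃ C : ℝ, ∀ g h, ‖α' g h‖ ≤ C) ∧
          (∀ g h k, d2 α' g h k = 0) ∧
          ∀ D : ℝ, (∀ g h k, ‖d2 α g h k‖ ≤ D) → ∀ g h, ‖α g h - α' g h‖ ≤ C₂ * D) := by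
  constructor
  -- ==================== Part (a) ====================
  · by_contra hcon
    push_neg at hcon
    have H := fun n : ℕ => hcon ((n:ℝ)+1) (by positivity)
    choose En i1 i2 i3 αn hbd hcoc hbad using H
    letI I1 : ∀ n, NormedAddCommGroup (En n) := i1
    letI I2 : ∀ n, NormedSpace ℝ (En n) := i2
    letI I3 : ∀ n, CompleteSpace (En n) := i3
    set S : ℕ → ℝ := fun n => sInf {D | ∀ g h : Γ, ‖αn n g h‖ ≤ D} with hSdef
    have hSbdd : ∀ n, BddBelow {D | ∀ g h : Γ, ‖αn n g h‖ ≤ D} :=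
      fun n => ⟨0, fun D hD => le_trans (norm_nonneg _) (hD 1 1)⟩
    have hSmem : ∀ n (g h : Γ), ‖αn n g h‖ ≤ S n := fun n g h =>
      le_csInf (hbd n) (fun D hD => hD g h)
    have hSle : ∀ n (D : ℝ), (∀ g h : Γ, ‖αn n g h‖ ≤ D) → S n ≤ D :=
      fun n D hD => csInf_le (hSbdd n) hD
    have hS0 : ∀ n, 0 ≤ S n := fun n => le_trans (norm_nonneg _) (hSmem n 1 1)
    have hSpos : ∀ n, 0 < S n := by
      intro n
      rcases lt_or_eq_of_le (hS0 n) with hlt | heq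
      · exact hlt
      · exfalso
        have hα0 : ∀ g h : Γ, αn n g h = 0 := by
          intro g h
          have h2 := hSmem n g h
          rw [← heq] at h2
          exact norm_le_zero_iff.mp h2
        obtain ⟨D, hD, g, hg⟩ := hbad n (fun _ => 0) (fun g h => by simp [d1, hα0])
        have hD0 : (0:ℝ) ≤ D := le_trans (norm_nonneg _) (hD 1 1)
        simp only [norm_zero] at hg
        nlinarith [(Nat.cast_nonneg n : (0:ℝ) ≤ n)]
    set A : Γ → Γ → ∀ n, En n →L[ℝ] ℝ := fun g h n => (S n)⁻¹ • αn n g h with hAdef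
    have hA1 : ∀ (g h : Γ) n, ‖A g h n‖ ≤ 1 := by
      intro g h n
      show ‖(S n)⁻¹ • αn n g h‖ ≤ 1
      have h1 := Aux13.norm_smul_le_of_le (inv_nonneg.mpr (hS0 n)) (hSmem n g h)
      rwa [inv_mul_cancel₀ (hSpos n).ne'] at h1
    have hA : ∀ g h : Γ, ∃ C, ∀ n, ‖A g h n‖ ≤ C := fun g h => ⟨1, hA1 g h⟩
    have hd : ∀ g h k : Γ, ∃ C, ∀ n, ‖d2 (fun g' h' => A g' h' n) g h k‖ ≤ C := by
      intro g h k
      refine ⟨4, fun n => ?_⟩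
      have e : d2 (fun g' h' => A g' h' n) g h k
          = A h k n - A (g*h) k n + A g (h*k) n - A g h n := rfl
      rw [e]
      have := Aux13.norm_comb_le (A h k n) (A (g*h) k n) (A g (h*k) n) (A g h n)
      linarith [hA1 h k n, hA1 (g*h) k n, hA1 g (h*k) n, hA1 g h n]
    have hdzero : ∀ n (g h k : Γ),
        d2 (fun g' h' => A g' h' n) g h k = (0 : En n →L[ℝ] ℝ) := by
      intro n g h k
      have e : d2 (fun g' h' => A g' h' n) g h k = (S n)⁻¹ • d2 (αn n) g h k :=
        Aux13.d2_smul _ _ g h k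
      rw [e, hcoc n, smul_zero]
    obtain ⟨β, ⟨Cb, hCb⟩, hβ⟩ := hvanish (lp (fun n => En n) 1)
      (fun g h => Aux13.pairing (A g h) (hA g h))
      ⟨1, fun g h => Aux13.pairing_norm_le _ _ (hA1 g h)⟩
      (by
        intro g h k
        rw [Aux13.d2_pairing A hA hd g h k]
        ext x
        have hz : ∀ n, (d2 (fun g' h' => A g' h' n) g h k) (x n) = 0 := fun n => by
          rw [hdzero n g h k]; simp
        simp only [Aux13.pairing_apply, ContinuousLinearMap.zero_apply]
        rw [tsum_congr hz, tsum_zero])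
    obtain ⟨m, hm⟩ := exists_nat_gt Cb
    have hCb0 : (0:ℝ) ≤ Cb := le_trans (norm_nonneg _) (hCb 1)
    have hβm : ∀ g h : Γ,
        d1 (fun g => S m • (β g).comp (Aux13.singleCLM m)) g h = αn m g h := by
      intro g h
      have e2 : d1 (fun g => S m • (β g).comp (Aux13.singleCLM m)) g h
          = S m • d1 (fun g => (β g).comp (Aux13.singleCLM m)) g h :=
        Aux13.d1_smul _ _ g h
      have e1 : d1 (fun g => (β g).comp (Aux13.singleCLM m)) g h
          = (d1 β g h).comp (Aux13.singleCLM m) := Aux13.d1_comp β _ g h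
      rw [e2, e1, hβ g h, Aux13.pairing_comp_single]
      show S m • ((S m)⁻¹ • αn m g h) = αn m g h
      rw [smul_smul, mul_inv_cancel₀ (hSpos m).ne', one_smul]
    obtain ⟨D, hD, g, hg⟩ := hbad m _ hβm
    have hDS : S m ≤ D := hSle m D hD
    have hcomp : ‖(β g).comp (Aux13.singleCLM m)‖ ≤ Cb :=
      Aux13.norm_comp_single_le (β g) (hCb g) m
    have hn2 : ‖S m • (β g).comp (Aux13.singleCLM m)‖ ≤ S m * Cb :=
      Aux13.norm_smul_le_of_le (hS0 m) hcomp
    have h1 : ((m:ℝ)+1) * S m ≤ ((m:ℝ)+1) * D :=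
      mul_le_mul_of_nonneg_left hDS (by positivity)
    have h2 : ((m:ℝ)+1) * S m < S m * Cb := lt_of_le_of_lt h1 (lt_of_lt_of_le hg hn2)
    have h3 : ((m:ℝ)+1) < Cb := by nlinarith [hSpos m]
    linarith
  -- ==================== Part (b) ====================
  · by_contra hcon
    push_neg at hcon
    have H := fun n : ℕ => hcon (((n:ℝ)+1) * ((n:ℝ)+1)) (by positivity)
    choose En i1 i2 i3 αn hbd hbad using H
    letI I1 : ∀ n, NormedAddCommGroup (En n) := i1
    letI I2 : ∀ n, NormedSpace ℝ (En n) := i2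
    letI I3 : ∀ n, CompleteSpace (En n) := i3
    set T : ℕ → ℝ := fun n => sInf {D | ∀ g h k : Γ, ‖d2 (αn n) g h k‖ ≤ D} with hTdef
    have hTne : ∀ n, ∃ D, ∀ g h k : Γ, ‖d2 (αn n) g h k‖ ≤ D := by
      intro n
      obtain ⟨C, hC⟩ := hbd n
      refine ⟨4*C, fun g h k => ?_⟩
      have e : d2 (αn n) g h k = αn n h k - αn n (g*h) k + αn n g (h*k) - αn n g h := rfl
      rw [e]
      have := Aux13.norm_comb_le (αn n h k) (αn n (g*h) k) (αn n g (h*k)) (αn n g h)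
      linarith [hC h k, hC (g*h) k, hC g (h*k), hC g h]
    have hTbdd : ∀ n, BddBelow {D | ∀ g h k : Γ, ‖d2 (αn n) g h k‖ ≤ D} :=
      fun n => ⟨0, fun D hD => le_trans (norm_nonneg _) (hD 1 1 1)⟩
    have hTmem : ∀ n (g h k : Γ), ‖d2 (αn n) g h k‖ ≤ T n := fun n g h k =>
      le_csInf (hTne n) (fun D hD => hD g h k)
    have hTle : ∀ n (D : ℝ), (∀ g h k : Γ, ‖d2 (αn n) g h k‖ ≤ D) → T n ≤ D :=
      fun n D hD => csInf_le (hTbdd n) hD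
    have hT0 : ∀ n, 0 ≤ T n := fun n => le_trans (norm_nonneg _) (hTmem n 1 1 1)
    have hTpos : ∀ n, 0 < T n := by
      intro n
      rcases lt_or_eq_of_le (hT0 n) with hlt | heq
      · exact hlt
      · exfalso
        have hz : ∀ g h k : Γ, d2 (αn n) g h k = 0 := by
          intro g h k
          have h2 := hTmem n g h k
          rw [← heq] at h2
          exact norm_le_zero_iff.mp h2
        obtain ⟨D, hD, g, h', hgh⟩ := hbad n (αn n) (hbd n) hz
        have hD0 : (0:ℝ) ≤ D := le_trans (norm_nonneg _) (hD 1 1 1)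
        simp only [sub_self, norm_zero] at hgh
        nlinarith [(Nat.cast_nonneg n : (0:ℝ) ≤ n)]
    have hcpos : ∀ n : ℕ, 0 < ((n:ℝ)+1) * T n := fun n => by
      have := hTpos n; positivity
    set A : Γ → Γ → ∀ n, En n →L[ℝ] ℝ :=
      fun g h n => (((n:ℝ)+1) * T n)⁻¹ • αn n g h with hAdef
    have hd2A : ∀ n (g h k : Γ), d2 (fun g' h' => A g' h' n) g h k
        = (((n:ℝ)+1) * T n)⁻¹ • d2 (αn n) g h k := fun n g h k => Aux13.d2_smul _ _ g h k
    have hd2A1 : ∀ (g h k : Γ) n,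
        ‖d2 (fun g' h' => A g' h' n) g h k‖ ≤ ((n:ℝ)+1)⁻¹ := by
      intro g h k n
      rw [hd2A n g h k]
      refine (Aux13.norm_smul_le_of_le (inv_nonneg.mpr (hcpos n).le) (hTmem n g h k)).trans
        (le_of_eq ?_)
      rw [mul_inv, mul_assoc, inv_mul_cancel₀ (hTpos n).ne', mul_one]
    have hγ1 : ∀ g h k : Γ, ∃ C, ∀ n,
        ‖d2 (fun g' h' => A g' h' n) g h k‖ ≤ C := by
      intro g h k
      exact ⟨1, fun n => (hd2A1 g h k n).trans
        (inv_le_one_of_one_le₀ (by linarith [(Nat.cast_nonneg n : (0:ℝ) ≤ n)]))⟩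
    have hAbd : ∀ n, ∃ C, ∀ g h : Γ, ‖A g h n‖ ≤ C := by
      intro n
      obtain ⟨C, hC⟩ := hbd n
      refine ⟨(((n:ℝ)+1) * T n)⁻¹ * C, fun g h => ?_⟩
      show ‖(((n:ℝ)+1) * T n)⁻¹ • αn n g h‖ ≤ _
      exact Aux13.norm_smul_le_of_le (inv_nonneg.mpr (hcpos n).le) (hC g h)
    choose Bf hBf using hAbd
    have hBf0 : ∀ n, 0 ≤ Bf n := fun n => le_trans (norm_nonneg _) (hBf n 1 1)
    -- the approximation property
    have happrox : ∀ ε > (0:ℝ), ∃ α : Γ → Γ → (lp (fun n => En n) 1 →L[ℝ] ℝ),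
        (∃ C : ℝ, ∀ g h, ‖α g h‖ ≤ C) ∧
        ∀ g h k, ‖Aux13.pairing (fun n => d2 (fun g' h' => A g' h' n) g h k) (hγ1 g h k)
          - d2 α g h k‖ ≤ ε := by
      intro ε hε
      obtain ⟨N, hN⟩ := exists_nat_gt ε⁻¹
      set Atr : Γ → Γ → ∀ n, En n →L[ℝ] ℝ :=
        fun g h n => if n < N then A g h n else 0 with hAtrdef
      have hAtrB : ∀ (g h : Γ) n, ‖Atr g h n‖ ≤ ∑ j ∈ Finset.range N, Bf j := by
        intro g h n
        show ‖if n < N then A g h n else 0‖ ≤ _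
        by_cases hn : n < N
        · rw [if_pos hn]
          exact le_trans (hBf n g h)
            (Finset.single_le_sum (fun j _ => hBf0 j) (Finset.mem_range.mpr hn))
        · rw [if_neg hn, norm_zero]
          exact Finset.sum_nonneg (fun j _ => hBf0 j)
      have hAtr : ∀ g h : Γ, ∃ C, ∀ n, ‖Atr g h n‖ ≤ C :=
        fun g h => ⟨_, hAtrB g h⟩
      have hdtr : ∀ g h k : Γ, ∃ C, ∀ n,
          ‖d2 (fun g' h' => Atr g' h' n) g h k‖ ≤ C := by
        intro g h k
        refine ⟨4 * ∑ j ∈ Finset.range N, Bf j, fun n => ?_⟩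
        have e : d2 (fun g' h' => Atr g' h' n) g h k
            = Atr h k n - Atr (g*h) k n + Atr g (h*k) n - Atr g h n := rfl
        rw [e]
        have := Aux13.norm_comb_le (Atr h k n) (Atr (g*h) k n) (Atr g (h*k) n) (Atr g h n)
        linarith [hAtrB h k n, hAtrB (g*h) k n, hAtrB g (h*k) n, hAtrB g h n]
      refine ⟨fun g h => Aux13.pairing (Atr g h) (hAtr g h),
        ⟨∑ j ∈ Finset.range N, Bf j,
          fun g h => Aux13.pairing_norm_le _ _ (hAtrB g h)⟩, ?_⟩
      intro g h k
      rw [Aux13.d2_pairing Atr hAtr hdtr g h k]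
      have hsub : ∃ C, ∀ n, ‖d2 (fun g' h' => A g' h' n) g h k
          - d2 (fun g' h' => Atr g' h' n) g h k‖ ≤ C := by
        obtain ⟨C1, h1⟩ := hγ1 g h k
        obtain ⟨C2, h2⟩ := hdtr g h k
        exact ⟨C1 + C2, fun n => le_trans (norm_sub_le _ _) (add_le_add (h1 n) (h2 n))⟩
      rw [← Aux13.pairing_sub _ _ (hγ1 g h k) (hdtr g h k) hsub]
      refine Aux13.pairing_norm_le _ _ (fun n => ?_)
      by_cases hn : n < N
      · have e : (fun g' h' => Atr g' h' n) = fun g' h' => A g' h' n := by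
          funext g' h'
          show (if n < N then A g' h' n else 0) = A g' h' n
          rw [if_pos hn]
        rw [e, sub_self, norm_zero]
        exact hε.le
      · have e : (fun g' h' => Atr g' h' n) = fun _ _ => (0 : En n →L[ℝ] ℝ) := by
          funext g' h'
          show (if n < N then A g' h' n else 0) = 0
          rw [if_neg hn]
        have ez : d2 (fun g' h' => Atr g' h' n) g h k = 0 := by
          rw [e]; simp [d2]
        rw [ez, sub_zero]
        refine (hd2A1 g h k n).trans ?_
        have hNn : (N:ℝ) ≤ (n:ℝ) := Nat.cast_le.mpr (not_lt.mp hn)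
        have h1 : ε⁻¹ < (n:ℝ) + 1 := by linarith
        have h2 : ((n:ℝ)+1)⁻¹ < ε⁻¹⁻¹ := by
          apply inv_strictAnti₀ (by positivity) h1
        rw [inv_inv] at h2
        exact h2.le
    obtain ⟨α', ⟨C', hC'⟩, hα'⟩ := hhaus (lp (fun n => En n) 1)
      (fun g h k => Aux13.pairing (fun n => d2 (fun g' h' => A g' h' n) g h k) (hγ1 g h k))
      ⟨1, fun g h k => Aux13.pairing_norm_le _ _ (fun n => (hd2A1 g h k n).trans
        (inv_le_one_of_one_le₀ (by linarith [(Nat.cast_nonneg n : (0:ℝ) ≤ n)])))⟩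
      happrox
    obtain ⟨m, hm⟩ := exists_nat_gt C'
    have hC'0 : (0:ℝ) ≤ C' := le_trans (norm_nonneg _) (hC' 1 1)
    -- component at m
    set α'c : Γ → Γ → En m →L[ℝ] ℝ :=
      fun g h => (α' g h).comp (Aux13.singleCLM m) with hα'cdef
    have hα'cB : ∀ g h : Γ, ‖α'c g h‖ ≤ C' := fun g h =>
      Aux13.norm_comp_single_le (α' g h) (hC' g h) m
    have hd2α'c : ∀ g h k : Γ,
        d2 α'c g h k = d2 (fun g' h' => A g' h' m) g h k := by
      intro g h k
      have e1 : d2 α'c g h k = (d2 α' g h k).comp (Aux13.singleCLM m) :=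
        Aux13.d2_comp α' _ g h k
      rw [e1, hα' g h k, Aux13.pairing_comp_single]
    -- candidate cocycle
    set αcand : Γ → Γ → En m →L[ℝ] ℝ :=
      fun g h => αn m g h - (((m:ℝ)+1) * T m) • α'c g h with hcanddef
    have hcandcoc : ∀ g h k : Γ, d2 αcand g h k = 0 := by
      intro g h k
      have e1 : d2 αcand g h k = d2 (αn m) g h k
          - d2 (fun g h => (((m:ℝ)+1) * T m) • α'c g h) g h k :=
        Aux13.d2_sub _ _ g h k
      have e2 : d2 (fun g h => (((m:ℝ)+1) * T m) • α'c g h) g h k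
          = (((m:ℝ)+1) * T m) • d2 α'c g h k := Aux13.d2_smul _ _ g h k
      rw [e1, e2, hd2α'c g h k, hd2A m g h k, smul_smul,
        mul_inv_cancel₀ (hcpos m).ne', one_smul, sub_self]
    have hcandbd : ∃ C, ∀ g h : Γ, ‖αcand g h‖ ≤ C := by
      obtain ⟨C, hC⟩ := hbd m
      refine ⟨C + (((m:ℝ)+1) * T m) * C', fun g h => ?_⟩
      show ‖αn m g h - (((m:ℝ)+1) * T m) • α'c g h‖ ≤ _
      refine le_trans (norm_sub_le _ _) (add_le_add (hC g h) ?_)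
      exact Aux13.norm_smul_le_of_le (hcpos m).le (hα'cB g h)
    obtain ⟨D, hD, g, h', hgh⟩ := hbad m αcand hcandbd hcandcoc
    have hDT : T m ≤ D := hTle m D hD
    have hdist : ‖αn m g h' - αcand g h'‖ ≤ (((m:ℝ)+1) * T m) * C' := by
      have e : αn m g h' - αcand g h' = (((m:ℝ)+1) * T m) • α'c g h' := by
        show αn m g h' - (αn m g h' - (((m:ℝ)+1) * T m) • α'c g h') = _
        abel
      rw [e]
      exact Aux13.norm_smul_le_of_le (hcpos m).le (hα'cB g h')
    have h1 : ((m:ℝ)+1) * ((m:ℝ)+1) * T m ≤ ((m:ℝ)+1) * ((m:ℝ)+1) * D :=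
      mul_le_mul_of_nonneg_left hDT (by positivity)
    have h2 : ((m:ℝ)+1) * ((m:ℝ)+1) * T m < (((m:ℝ)+1) * T m) * C' :=
      lt_of_le_of_lt h1 (lt_of_lt_of_le hgh hdist)
    have h3 : ((m:ℝ)+1) < C' := by
      by_contra hle
      push_neg at hle
      have h4 := mul_le_mul_of_nonneg_left hle (hcpos m).le
      nlinarith [h2, h4, hTpos m, (Nat.cast_nonneg m : (0:ℝ) ≤ m)]
    linarith
end

section
/- Let Γ be a (discrete) group such that every bounded 2-cocycle Γ² → ℝ is equal to δ¹β for some bounded β : Γ → ℝ, and such that the set {δ²α : α a bounded function Γ² → ℝ} is closed in the sup-norm Banach space of bounded functions Γ³ → ℝ. Fix a non-principal ultrafilter 𝒰 on ℕ. Let (αₙ) be a sequence of functions Γ² → ℝ with sup_n ‖αₙ‖_∞ < ∞ and with ‖δ²αₙ‖_∞ → 0 along 𝒰. Then there exists a sequence of functions βₙ : Γ → ℝ with sup_n ‖βₙ‖_∞ < ∞ and ‖αₙ − δ¹βₙ‖_∞ → 0 along 𝒰. -/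
namespace Stmt14

variable {Γ : Type*} [Group Γ]

/-- Inhomogeneous differential `δ¹β(g,h) = β(g) + β(h) − β(gh)`. -/
def d1 (β : Γ → ℝ) (g h : Γ) : ℝ := β g + β h - β (g * h)

/-- Inhomogeneous differential `δ²α(g,h,k) = α(h,k) − α(gh,k) + α(g,hk) − α(g,h)`. -/
def d2 (α : Γ → Γ → ℝ) (g h k : Γ) : ℝ := α h k - α (g * h) k + α g (h * k) - α g h

end Stmt14

open Stmt14

namespace Stmt14Aux

open BoundedContinuousFunction

/-- A bounded function with bounded coboundary is dominated by the coboundary bound. -/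
theorem qm_bound {Γ : Type*} [Group Γ] (β : Γ → ℝ) (M D : ℝ)
    (hM : ∀ g, |β g| ≤ M) (hD : ∀ g h, |d1 β g h| ≤ D) (g : Γ) : |β g| ≤ D := by
  have hpow : ∀ n : ℕ, |β (g ^ (n + 1)) - ((n : ℝ) + 1) * β g| ≤ (n : ℝ) * D := by
    intro n
    induction n with
    | zero => simp
    | succ n ih =>
      have h1 := hD (g ^ (n + 1)) g
      have key : β (g ^ (n + 1 + 1)) - ((((n : ℕ) + 1 : ℕ) : ℝ) + 1) * β g =
          (-(d1 β (g ^ (n + 1)) g)) + (β (g ^ (n + 1)) - ((n : ℝ) + 1) * β g) := by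
        simp only [d1, ← pow_succ]
        push_cast
        ring
      calc |β (g ^ (n + 1 + 1)) - ((((n : ℕ) + 1 : ℕ) : ℝ) + 1) * β g|
          = |(-(d1 β (g ^ (n + 1)) g)) + (β (g ^ (n + 1)) - ((n : ℝ) + 1) * β g)| := by
            rw [key]
        _ ≤ |(-(d1 β (g ^ (n + 1)) g))| + |β (g ^ (n + 1)) - ((n : ℝ) + 1) * β g| :=
            abs_add_le _ _
        _ ≤ D + (n : ℝ) * D := by
            rw [abs_neg]; exact add_le_add h1 ih
        _ = (((n : ℕ) + 1 : ℕ) : ℝ) * D := by push_cast; ring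
  have hdiv : ∀ n : ℕ, |β g| ≤ M / ((n : ℝ) + 1) + D := by
    intro n
    have hn1 : (0 : ℝ) < (n : ℝ) + 1 := by positivity
    have h1 : ((n : ℝ) + 1) * |β g| ≤ M + (n : ℝ) * D := by
      have : |((n : ℝ) + 1) * β g| ≤ |β (g ^ (n + 1))| + (n : ℝ) * D := by
        have := hpow n
        have htr : |((n : ℝ) + 1) * β g| ≤
            |β (g ^ (n + 1))| + |β (g ^ (n + 1)) - ((n : ℝ) + 1) * β g| := by
          have := abs_sub_abs_le_abs_sub (((n : ℝ) + 1) * β g) (β (g ^ (n + 1)))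
          have h2 : |(((n : ℝ) + 1) * β g) - β (g ^ (n + 1))|
              = |β (g ^ (n + 1)) - ((n : ℝ) + 1) * β g| := abs_sub_comm _ _
          linarith
        linarith
      have h3 : |((n : ℝ) + 1) * β g| = ((n : ℝ) + 1) * |β g| := by
        rw [abs_mul, abs_of_pos hn1]
      rw [h3] at this
      have := hM (g ^ (n + 1))
      linarith
    have hD0 : 0 ≤ D := le_trans (abs_nonneg _) (hD g g)
    rw [div_add' _ _ _ (ne_of_gt hn1), le_div_iff₀ hn1]
    nlinarith
  refine le_of_forall_pos_le_add fun ε hε => ?_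
  obtain ⟨n, hn⟩ := exists_nat_gt (M / ε)
  have hn1 : (0 : ℝ) < (n : ℝ) + 1 := by positivity
  have hM0 : 0 ≤ M := le_trans (abs_nonneg _) (hM g)
  have hle : M / ((n : ℝ) + 1) ≤ ε := by
    rw [div_le_iff₀ hn1]
    have : M / ε < (n : ℝ) + 1 := lt_trans hn (by linarith)
    calc M = (M / ε) * ε := by field_simp
      _ ≤ ((n : ℝ) + 1) * ε := by nlinarith
      _ = ε * ((n : ℝ) + 1) := by ring
  have := hdiv n
  linarith

variable (Γ : Type*) [Group Γ] [TopologicalSpace Γ] [DiscreteTopology Γ]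

/-- The coboundary `δ²` as a continuous linear map between Banach spaces of bounded
functions. -/
noncomputable def D2 : ((Γ × Γ) →ᵇ ℝ) →L[ℝ] ((Γ × Γ × Γ) →ᵇ ℝ) :=
  LinearMap.mkContinuous
    { toFun := fun f => BoundedContinuousFunction.ofNormedAddCommGroupDiscrete
        (fun p => f (p.2.1, p.2.2) - f (p.1 * p.2.1, p.2.2) + f (p.1, p.2.1 * p.2.2)
          - f (p.1, p.2.1))
        (4 * ‖f‖) (fun p => by
          have h1 := f.norm_coe_le_norm (p.2.1, p.2.2)
          have h2 := f.norm_coe_le_norm (p.1 * p.2.1, p.2.2)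
          have h3 := f.norm_coe_le_norm (p.1, p.2.1 * p.2.2)
          have h4 := f.norm_coe_le_norm (p.1, p.2.1)
          simp only [Real.norm_eq_abs] at *
          have e1 := abs_le.mp h1
          have e2 := abs_le.mp h2
          have e3 := abs_le.mp h3
          have e4 := abs_le.mp h4
          rw [abs_le]
          constructor <;> [skip; skip] <;> obtain ⟨_, _⟩ := e1 <;>
            obtain ⟨_, _⟩ := e2 <;> obtain ⟨_, _⟩ := e3 <;> obtain ⟨_, _⟩ := e4 <;> linarith)
      map_add' := fun f g => by
        ext p
        simp only [BoundedContinuousFunction.coe_ofNormedAddCommGroupDiscrete,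
          BoundedContinuousFunction.coe_add, Pi.add_apply]
        ring
      map_smul' := fun r f => by
        ext p
        simp only [BoundedContinuousFunction.coe_ofNormedAddCommGroupDiscrete,
          BoundedContinuousFunction.coe_smul, Pi.smul_apply, RingHom.id_apply, smul_eq_mul]
        ring }
    4 (fun f => by
      have h4 : (0 : ℝ) ≤ 4 * ‖f‖ := by positivity
      simp only [LinearMap.coe_mk, AddHom.coe_mk]
      exact BoundedContinuousFunction.norm_ofNormedAddCommGroup_le _ h4 _)

theorem D2_apply (f : (Γ × Γ) →ᵇ ℝ) (p : Γ × Γ × Γ) :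
    D2 Γ f p = f (p.2.1, p.2.2) - f (p.1 * p.2.1, p.2.2) + f (p.1, p.2.1 * p.2.2)
      - f (p.1, p.2.1) := rfl

theorem stmt_aux {Γ : Type*} [Group Γ] [TopologicalSpace Γ] [DiscreteTopology Γ] [Nonempty Γ]
    (h2 : ∀ α : Γ → Γ → ℝ, (∃ C : ℝ, ∀ g h, |α g h| ≤ C) → (∀ g h k, d2 α g h k = 0) →
      ∃ β : Γ → ℝ, (∃ C : ℝ, ∀ g, |β g| ≤ C) ∧ ∀ g h, d1 β g h = α g h)
    (h3 : ∀ γ : Γ → Γ → Γ → ℝ, (∃ C : ℝ, ∀ g h k, |γ g h k| ≤ C) →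
      (∀ ε > (0 : ℝ), ∃ α : Γ → Γ → ℝ, (∃ C : ℝ, ∀ g h, |α g h| ≤ C) ∧
        ∀ g h k, |γ g h k - d2 α g h k| ≤ ε) →
      ∃ α : Γ → Γ → ℝ, (∃ C : ℝ, ∀ g h, |α g h| ≤ C) ∧ ∀ g h k, d2 α g h k = γ g h k)
    (𝒰 : Ultrafilter ℕ)
    (α : ℕ → Γ → Γ → ℝ) (hbdd : ∃ C : ℝ, ∀ n g h, |α n g h| ≤ C)
    (hdef : ∃ c : ℕ → ℝ, Filter.Tendsto c (𝒰 : Filter ℕ) (nhds 0) ∧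
      ∀ n g h k, |d2 (α n) g h k| ≤ c n) :
    ∃ β : ℕ → Γ → ℝ, (∃ C : ℝ, ∀ n g, |β n g| ≤ C) ∧
      ∃ c : ℕ → ℝ, Filter.Tendsto c (𝒰 : Filter ℕ) (nhds 0) ∧
        ∀ n g h, |α n g h - d1 (β n) g h| ≤ c n := by
  obtain ⟨C, hC⟩ := hbdd
  obtain ⟨c, hc, hcb⟩ := hdef
  obtain ⟨g0⟩ := (inferInstance : Nonempty Γ)
  have hC0 : 0 ≤ C := le_trans (abs_nonneg _) (hC 0 g0 g0)
  have hc0 : ∀ n, 0 ≤ c n := fun n => le_trans (abs_nonneg _) (hcb n g0 g0 g0)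
  set M : Submodule ℝ ((Γ × Γ × Γ) →ᵇ ℝ) :=
    LinearMap.range ((D2 Γ : ((Γ × Γ) →ᵇ ℝ) →L[ℝ] ((Γ × Γ × Γ) →ᵇ ℝ)) :
      ((Γ × Γ) →ᵇ ℝ) →ₗ[ℝ] ((Γ × Γ × Γ) →ᵇ ℝ)) with hM
  have hmem : ∀ y : (Γ × Γ × Γ) →ᵇ ℝ, y ∈ M ↔ ∃ x, D2 Γ x = y := by
    intro y
    rw [hM]
    exact LinearMap.mem_range
  have hclosed : IsClosed (M : Set ((Γ × Γ × Γ) →ᵇ ℝ)) := by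
    refine isClosed_of_closure_subset ?_
    intro γ hγ
    have happrox : ∀ ε > (0 : ℝ), ∃ a : Γ → Γ → ℝ, (∃ C : ℝ, ∀ g h, |a g h| ≤ C) ∧
        ∀ g h k, |γ (g, h, k) - d2 a g h k| ≤ ε := by
      intro ε hε
      obtain ⟨y, hyM, hy⟩ := Metric.mem_closure_iff.mp hγ ε hε
      obtain ⟨x, hx⟩ := (hmem y).mp hyM
      refine ⟨fun g h => x (g, h), ⟨‖x‖, fun g h => by
        simpa [Real.norm_eq_abs] using x.norm_coe_le_norm (g, h)⟩, ?_⟩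
      intro g h k
      have heq : d2 (fun g h => x (g, h)) g h k = (D2 Γ x) (g, h, k) := by
        simp [d2, D2_apply]
      rw [heq, hx]
      have hle := (γ - y).norm_coe_le_norm (g, h, k)
      simp only [BoundedContinuousFunction.coe_sub, Pi.sub_apply, Real.norm_eq_abs] at hle
      have : ‖γ - y‖ ≤ ε := by
        rw [← dist_eq_norm] at *
        exact le_of_lt hy
      linarith
    obtain ⟨a0, ⟨C0, hC0'⟩, ha0⟩ := h3 (fun g h k => γ (g, h, k))
      ⟨‖γ‖, fun g h k => by simpa [Real.norm_eq_abs] using γ.norm_coe_le_norm (g, h, k)⟩ happrox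
    rw [SetLike.mem_coe, hmem]
    have habs : ∀ p : Γ × Γ, ‖a0 p.1 p.2‖ ≤ C0 := fun p => by
      simpa [Real.norm_eq_abs] using hC0' p.1 p.2
    refine ⟨BoundedContinuousFunction.ofNormedAddCommGroupDiscrete
      (fun p : Γ × Γ => a0 p.1 p.2) C0 habs, ?_⟩
    ext ⟨g, h, k⟩
    have := ha0 g h k
    simpa [D2_apply, d2] using this
  haveI : CompleteSpace M := hclosed.completeSpace_coe
  set S : ((Γ × Γ) →ᵇ ℝ) →L[ℝ] M :=
    (D2 Γ).codRestrict M (fun x => (hmem _).mpr ⟨x, rfl⟩) with hS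
  have hSsurj : Function.Surjective S := by
    rintro ⟨y, hy⟩
    obtain ⟨x, hx⟩ := (hmem y).mp hy
    exact ⟨x, Subtype.ext (by simpa [hS] using hx)⟩
  obtain ⟨K, hK0, hKspec⟩ := ContinuousLinearMap.exists_preimage_norm_le (𝕜 := ℝ) (𝕜' := ℝ) (σ := RingHom.id ℝ)
    (E := (Γ × Γ) →ᵇ ℝ) (F := M) S hSsurj
  have key : ∀ n : ℕ, ∃ β : Γ → ℝ, (∀ g, |β g| ≤ C + K * c n) ∧
      ∀ g h, |α n g h - d1 β g h| ≤ K * c n := by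
    intro n
    set A : (Γ × Γ) →ᵇ ℝ := BoundedContinuousFunction.ofNormedAddCommGroupDiscrete
      (fun p : Γ × Γ => α n p.1 p.2) C (fun p => by
        simpa [Real.norm_eq_abs] using hC n p.1 p.2) with hA
    have hDA : ‖D2 Γ A‖ ≤ c n := by
      rw [BoundedContinuousFunction.norm_le (hc0 n)]
      rintro ⟨g, h, k⟩
      have heq : (D2 Γ A) (g, h, k) = d2 (α n) g h k := by
        simp [D2_apply, hA, d2]
      rw [Real.norm_eq_abs, heq]
      exact hcb n g h k
    obtain ⟨x, hx, hxnorm⟩ := hKspec ⟨D2 Γ A, (hmem _).mpr ⟨A, rfl⟩⟩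
    have hxn : ‖x‖ ≤ K * c n := by
      refine hxnorm.trans ?_
      have : ‖(⟨D2 Γ A, (hmem _).mpr ⟨A, rfl⟩⟩ : M)‖ = ‖D2 Γ A‖ := rfl
      rw [this]
      exact mul_le_mul_of_nonneg_left hDA (le_of_lt hK0)
    have hxeq : D2 Γ x = D2 Γ A := by
      have := congrArg Subtype.val hx
      simpa [hS] using this
    set Z : Γ → Γ → ℝ := fun g h => α n g h - x (g, h) with hZ
    have hZcoc : ∀ g h k, d2 Z g h k = 0 := by
      intro g h k
      have hsplit : d2 Z g h k = d2 (α n) g h k - d2 (fun g h => x (g, h)) g h k := by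
        simp only [d2, hZ]; ring
      have h1 : d2 (fun g h => x (g, h)) g h k = (D2 Γ x) (g, h, k) := by
        simp [d2, D2_apply]
      have h2 : d2 (α n) g h k = (D2 Γ A) (g, h, k) := by
        simp [d2, D2_apply, hA]
      rw [hsplit, h1, h2, hxeq, sub_self]
    have hZbdd : ∀ g h, |Z g h| ≤ C + K * c n := by
      intro g h
      have hx1 : |x (g, h)| ≤ K * c n := by
        have := x.norm_coe_le_norm (g, h)
        rw [Real.norm_eq_abs] at this
        linarith
      have := hC n g h
      calc |Z g h| ≤ |α n g h| + |x (g, h)| := by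
            rw [hZ]; exact abs_sub _ _
        _ ≤ C + K * c n := add_le_add this hx1
    obtain ⟨β, ⟨Mb, hMb⟩, hβ⟩ := h2 Z ⟨C + K * c n, hZbdd⟩ hZcoc
    refine ⟨β, fun g => qm_bound β Mb (C + K * c n) hMb
      (fun g h => by rw [hβ]; exact hZbdd g h) g, ?_⟩
    intro g h
    have heq : α n g h - d1 β g h = x (g, h) := by
      rw [hβ]; simp [hZ]
    rw [heq]
    have := x.norm_coe_le_norm (g, h)
    rw [Real.norm_eq_abs] at this
    linarith
  choose B hB1 hB2 using key
  refine ⟨fun n => if c n ≤ 1 then B n else 0, ⟨C + K, ?_⟩,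
    fun n => if c n ≤ 1 then K * c n else C, ?_, ?_⟩
  · intro n g
    by_cases hn : c n ≤ 1
    · simp only [hn, if_true]
      refine (hB1 n g).trans ?_
      have : K * c n ≤ K * 1 := mul_le_mul_of_nonneg_left hn (le_of_lt hK0)
      linarith
    · simp only [hn, if_false, Pi.zero_apply, abs_zero]
      positivity
  · have hev : ∀ᶠ n in (𝒰 : Filter ℕ), c n < 1 := hc.eventually_lt_const one_pos
    have htd : Filter.Tendsto (fun n => K * c n) (𝒰 : Filter ℕ) (nhds 0) := by
      simpa using hc.const_mul K
    refine htd.congr' (hev.mono fun n hn => ?_)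
    simp [le_of_lt hn]
  · intro n g h
    by_cases hn : c n ≤ 1
    · simp only [hn, if_true]
      exact hB2 n g h
    · simp only [hn, if_false, Pi.zero_apply, d1, sub_zero, add_zero, zero_add, zero_sub,
        neg_zero]
      simpa using hC n g h

end Stmt14Aux

/-- Suppose `H_b²(Γ, ℝ) = 0` (every bounded real 2-cocycle is the coboundary of a bounded
1-cochain) and `H_b³(Γ, ℝ)` is Hausdorff (the set of coboundaries `δ²α` of bounded
2-cochains is closed under uniform limits among bounded functions `Γ³ → ℝ`).  Let `𝒰` be a
non-principal ultrafilter on `ℕ`, and `(αₙ)` a uniformly bounded sequence of 2-cochains with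
`‖δ²αₙ‖_∞ → 0` along `𝒰` (expressed by a dominating sequence `c → 0`).  Then there is a
uniformly bounded sequence `(βₙ)` of 1-cochains with `‖αₙ − δ¹βₙ‖_∞ → 0` along `𝒰`
(i.e. `H_a²(Γ, *ℝ) = 0`). -/
theorem stmt_14 {Γ : Type*} [Group Γ]
    (h2 : ∀ α : Γ → Γ → ℝ, (∃ C : ℝ, ∀ g h, |α g h| ≤ C) → (∀ g h k, d2 α g h k = 0) →
      ∃ β : Γ → ℝ, (∃ C : ℝ, ∀ g, |β g| ≤ C) ∧ ∀ g h, d1 β g h = α g h)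
    (h3 : ∀ γ : Γ → Γ → Γ → ℝ, (∃ C : ℝ, ∀ g h k, |γ g h k| ≤ C) →
      (∀ ε > (0 : ℝ), ∃ α : Γ → Γ → ℝ, (∃ C : ℝ, ∀ g h, |α g h| ≤ C) ∧
        ∀ g h k, |γ g h k - d2 α g h k| ≤ ε) →
      ∃ α : Γ → Γ → ℝ, (∃ C : ℝ, ∀ g h, |α g h| ≤ C) ∧ ∀ g h k, d2 α g h k = γ g h k)
    (𝒰 : Ultrafilter ℕ) (h𝒰 : ∀ a : ℕ, (𝒰 : Filter ℕ) ≠ pure a)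
    (α : ℕ → Γ → Γ → ℝ) (hbdd : ∃ C : ℝ, ∀ n g h, |α n g h| ≤ C)
    (hdef : ∃ c : ℕ → ℝ, Filter.Tendsto c (𝒰 : Filter ℕ) (nhds 0) ∧
      ∀ n g h k, |d2 (α n) g h k| ≤ c n) :
    ∃ β : ℕ → Γ → ℝ, (∃ C : ℝ, ∀ n g, |β n g| ≤ C) ∧
      ∃ c : ℕ → ℝ, Filter.Tendsto c (𝒰 : Filter ℕ) (nhds 0) ∧
        ∀ n g h, |α n g h - d1 (β n) g h| ≤ c n := by
  letI : TopologicalSpace Γ := ⊥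
  haveI : DiscreteTopology Γ := ⟨rfl⟩
  haveI : Nonempty Γ := ⟨1⟩
  exact Stmt14Aux.stmt_aux h2 h3 𝒰 α hbdd hdef
end

section
/- The 2½-property of (discrete) groups is preserved under group extensions: if N is a normal subgroup of a group G such that both N and the quotient G/N have the 2½-property, then G has the 2½-property. In particular, a finite direct product of groups with the 2½-property has the 2½-property. -/
namespace Stmt15

/-- A group `Γ` has the **2½-property** if every bounded real 2-cocycle (for the
inhomogeneous differential with trivial coefficients) is the coboundary `δ¹β` of a bounded
1-cochain `β` (i.e. `H_b²(Γ, ℝ) = 0`), and the set of coboundaries `δ²α` of bounded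
2-cochains is closed under uniform limits among bounded functions `Γ³ → ℝ`
(i.e. `H_b³(Γ, ℝ)` is Hausdorff). -/
def TwoAndHalf (Γ : Type*) [Group Γ] : Prop :=
  (∀ α : Γ → Γ → ℝ, (∃ C : ℝ, ∀ g h, |α g h| ≤ C) →
    (∀ g h k : Γ, α h k - α (g * h) k + α g (h * k) - α g h = 0) →
    ∃ β : Γ → ℝ, (∃ C : ℝ, ∀ g, |β g| ≤ C) ∧ ∀ g h, β g + β h - β (g * h) = α g h) ∧
  (∀ γ : Γ → Γ → Γ → ℝ, (∃ C : ℝ, ∀ g h k, |γ g h k| ≤ C) →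
    (∀ ε > (0 : ℝ), ∃ α : Γ → Γ → ℝ, (∃ C : ℝ, ∀ g h, |α g h| ≤ C) ∧
      ∀ g h k : Γ, |γ g h k - (α h k - α (g * h) k + α g (h * k) - α g h)| ≤ ε) →
    ∃ α : Γ → Γ → ℝ, (∃ C : ℝ, ∀ g h, |α g h| ≤ C) ∧
      ∀ g h k : Γ, α h k - α (g * h) k + α g (h * k) - α g h = γ g h k)

end Stmt15

open Stmt15

namespace Stmt15Proof
open BoundedContinuousFunction

variable {Γ : Type*} [Group Γ]

/-- inhomogeneous δ¹ -/
def d1 (β : Γ → ℝ) (g h : Γ) : ℝ := β g + β h - β (g * h)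

/-- inhomogeneous δ² -/
def d2 (f : Γ → Γ → ℝ) (g h k : Γ) : ℝ := f h k - f (g * h) k + f g (h * k) - f g h

/-- Uniform coboundary-approximation property with constant K. -/
def UC (Γ : Type*) [Group Γ] (K : ℝ) : Prop :=
  ∀ f : Γ → Γ → ℝ, (∃ C, ∀ g h, |f g h| ≤ C) → ∀ ε : ℝ, 0 ≤ ε →
    (∀ g h k, |d2 f g h k| ≤ ε) →
    ∃ β : Γ → ℝ, (∃ C, ∀ g, |β g| ≤ C) ∧ ∀ g h, |f g h - d1 β g h| ≤ K * ε

theorem uniform_of_twoAndHalf (h : TwoAndHalf Γ) : ∃ K : ℝ, 0 ≤ K ∧ UC Γ K := by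
  classical
  letI : TopologicalSpace Γ := ⊥
  haveI : DiscreteTopology Γ := ⟨rfl⟩
  -- δ² as a continuous linear map between spaces of bounded functions
  let D2L : ((Γ × Γ) →ᵇ ℝ) →ₗ[ℝ] ((Γ × Γ × Γ) →ᵇ ℝ) :=
    { toFun := fun α => BoundedContinuousFunction.ofNormedAddCommGroup
        (fun p => α (p.2.1, p.2.2) - α (p.1 * p.2.1, p.2.2) + α (p.1, p.2.1 * p.2.2)
          - α (p.1, p.2.1))
        continuous_of_discreteTopology (4 * ‖α‖) (by
          intro p
          have h1 := α.norm_coe_le_norm (p.2.1, p.2.2)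
          have h2 := α.norm_coe_le_norm (p.1 * p.2.1, p.2.2)
          have h3 := α.norm_coe_le_norm (p.1, p.2.1 * p.2.2)
          have h4 := α.norm_coe_le_norm (p.1, p.2.1)
          simp only [Real.norm_eq_abs] at h1 h2 h3 h4 ⊢
          have h1' := abs_le.mp h1
          have h2' := abs_le.mp h2
          have h3' := abs_le.mp h3
          have h4' := abs_le.mp h4
          have hn : (0:ℝ) ≤ ‖α‖ := norm_nonneg α
          rw [abs_le]
          constructor <;> linarith [h1'.1, h1'.2, h2'.1, h2'.2, h3'.1, h3'.2, h4'.1, h4'.2])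
      map_add' := by
        intro x y
        ext p
        simp [BoundedContinuousFunction.coe_ofNormedAddCommGroup]
        ring
      map_smul' := by
        intro c x
        ext p
        simp [BoundedContinuousFunction.coe_ofNormedAddCommGroup]
        ring }
  have hD2Lapp : ∀ (α : (Γ × Γ) →ᵇ ℝ) (p : Γ × Γ × Γ),
      D2L α p = α (p.2.1, p.2.2) - α (p.1 * p.2.1, p.2.2) + α (p.1, p.2.1 * p.2.2)
        - α (p.1, p.2.1) := by
    intro α p
    simp [D2L, BoundedContinuousFunction.coe_ofNormedAddCommGroup]
  have hbnd : ∀ α : (Γ × Γ) →ᵇ ℝ, ‖D2L α‖ ≤ 4 * ‖α‖ := by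
    intro α
    rw [BoundedContinuousFunction.norm_le (by positivity)]
    intro p
    rw [hD2Lapp]
    have h1 := α.norm_coe_le_norm (p.2.1, p.2.2)
    have h2 := α.norm_coe_le_norm (p.1 * p.2.1, p.2.2)
    have h3 := α.norm_coe_le_norm (p.1, p.2.1 * p.2.2)
    have h4 := α.norm_coe_le_norm (p.1, p.2.1)
    simp only [Real.norm_eq_abs] at h1 h2 h3 h4 ⊢
    have h1' := abs_le.mp h1
    have h2' := abs_le.mp h2
    have h3' := abs_le.mp h3
    have h4' := abs_le.mp h4
    rw [abs_le]
    constructor <;> linarith [h1'.1, h1'.2, h2'.1, h2'.2, h3'.1, h3'.2, h4'.1, h4'.2]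
  let D2 : ((Γ × Γ) →ᵇ ℝ) →L[ℝ] ((Γ × Γ × Γ) →ᵇ ℝ) := D2L.mkContinuous 4 hbnd
  have hD2app : ∀ (α : (Γ × Γ) →ᵇ ℝ) (p : Γ × Γ × Γ),
      D2 α p = α (p.2.1, p.2.2) - α (p.1 * p.2.1, p.2.2) + α (p.1, p.2.1 * p.2.2)
        - α (p.1, p.2.1) := fun α p => hD2Lapp α p
  -- the range of D2 is closed, by hypothesis (b)
  have hcl : IsClosed ((LinearMap.range (D2 : ((Γ × Γ) →ᵇ ℝ) →ₗ[ℝ] ((Γ × Γ × Γ) →ᵇ ℝ)) : Submodule ℝ ((Γ × Γ × Γ) →ᵇ ℝ)) : Set ((Γ × Γ × Γ) →ᵇ ℝ)) := by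
    apply isClosed_of_closure_subset
    intro γ hγ
    have happ : ∀ ε > (0:ℝ), ∃ α : Γ → Γ → ℝ, (∃ C : ℝ, ∀ g h, |α g h| ≤ C) ∧
        ∀ g h k : Γ, |(fun g h k => γ (g,h,k)) g h k
          - (α h k - α (g * h) k + α g (h * k) - α g h)| ≤ ε := by
      intro ε hε
      rw [Metric.mem_closure_iff] at hγ
      obtain ⟨y, hy, hdy⟩ := hγ ε hε
      obtain ⟨x, hx⟩ := hy
      refine ⟨fun g h => x (g, h), ⟨‖x‖, fun g h => by
        simpa using x.norm_coe_le_norm (g,h)⟩, ?_⟩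
      intro g h k
      have hpt := BoundedContinuousFunction.dist_coe_le_dist (f := γ) (g := y) (g,h,k)
      have hlt := lt_of_le_of_lt hpt hdy
      rw [← hx, ContinuousLinearMap.coe_coe, hD2app, Real.dist_eq] at hlt
      simpa using le_of_lt hlt
    obtain ⟨α, ⟨C, hC⟩, hα⟩ := h.2 (fun g h k => γ (g,h,k))
      ⟨‖γ‖, fun g h k => by simpa using γ.norm_coe_le_norm (g,h,k)⟩ happ
    refine ⟨BoundedContinuousFunction.ofNormedAddCommGroup (fun p => α p.1 p.2)
      continuous_of_discreteTopology C (fun p => by simpa using hC p.1 p.2), ?_⟩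
    ext p
    rw [ContinuousLinearMap.coe_coe, hD2app]
    simp only [BoundedContinuousFunction.coe_ofNormedAddCommGroup]
    exact hα p.1 p.2.1 p.2.2
  haveI : CompleteSpace (LinearMap.range (D2 : ((Γ × Γ) →ᵇ ℝ) →ₗ[ℝ] ((Γ × Γ × Γ) →ᵇ ℝ))) := hcl.completeSpace_coe
  let D2' : ((Γ × Γ) →ᵇ ℝ) →L[ℝ] (LinearMap.range (D2 : ((Γ × Γ) →ᵇ ℝ) →ₗ[ℝ] ((Γ × Γ × Γ) →ᵇ ℝ))) := D2.codRestrict (LinearMap.range (D2 : ((Γ × Γ) →ᵇ ℝ) →ₗ[ℝ] ((Γ × Γ × Γ) →ᵇ ℝ))) (fun x => LinearMap.mem_range_self _ x)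
  have hsurj : Function.Surjective D2' := by
    rintro ⟨y, x, rfl⟩
    exact ⟨x, rfl⟩
  obtain ⟨C, hCpos, hC⟩ := ContinuousLinearMap.exists_preimage_norm_le (𝕜 := ℝ) (𝕜' := ℝ) (σ := RingHom.id ℝ) (E := (Γ × Γ) →ᵇ ℝ) (F := LinearMap.range (D2 : ((Γ × Γ) →ᵇ ℝ) →ₗ[ℝ] ((Γ × Γ × Γ) →ᵇ ℝ))) D2' hsurj
  refine ⟨C, le_of_lt hCpos, ?_⟩
  intro f ⟨Cf, hCf⟩ ε hε hρ
  -- package f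
  let fb : (Γ × Γ) →ᵇ ℝ := BoundedContinuousFunction.ofNormedAddCommGroup
    (fun p => f p.1 p.2) continuous_of_discreteTopology Cf
    (fun p => by simpa using hCf p.1 p.2)
  have hfb : ∀ g h : Γ, fb (g, h) = f g h := fun g h => rfl
  obtain ⟨x, hx, hxn⟩ := hC (D2' fb)
  have hDx : ∀ p : Γ × Γ × Γ, D2 x p = D2 fb p := by
    intro p
    have : (D2' x : (Γ × Γ × Γ) →ᵇ ℝ) = D2' fb := congrArg Subtype.val hx
    have := congrArg (fun u : (Γ × Γ × Γ) →ᵇ ℝ => u p) this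
    exact this
  have hynorm : ‖D2' fb‖ ≤ ε := by
    rw [← Submodule.norm_coe]
    have hco : ((D2' fb : LinearMap.range (D2 : ((Γ × Γ) →ᵇ ℝ) →ₗ[ℝ] ((Γ × Γ × Γ) →ᵇ ℝ))) : (Γ × Γ × Γ) →ᵇ ℝ) = D2 fb := rfl
    rw [hco, BoundedContinuousFunction.norm_le hε]
    intro p
    rw [hD2app]
    have := hρ p.1 p.2.1 p.2.2
    simpa [d2, Real.norm_eq_abs, hfb] using this
  -- f minus x is a true cocycle
  obtain ⟨β, hβb, hβ⟩ := h.1 (fun g h => f g h - x (g, h))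
    ⟨Cf + ‖x‖, fun g h => by
      have h1 := abs_le.mp (hCf g h)
      have h2 := x.norm_coe_le_norm (g,h)
      rw [Real.norm_eq_abs] at h2
      have h2' := abs_le.mp h2
      rw [abs_le]
      constructor <;> linarith [h1.1, h1.2, h2'.1, h2'.2]⟩
    (by
      intro g h k
      have hDxk := hDx (g, h, k)
      rw [hD2app, hD2app] at hDxk
      dsimp only at hDxk ⊢
      simp only [hfb] at hDxk
      linarith)
  refine ⟨β, hβb, ?_⟩
  intro g h
  have hβ' := hβ g h
  have hxb : |x (g,h)| ≤ C * ε := by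
    have := x.norm_coe_le_norm (g,h)
    rw [Real.norm_eq_abs] at this
    exact le_trans this (le_trans hxn (by nlinarith [norm_nonneg (D2' fb)]))
  have : f g h - d1 β g h = x (g, h) := by
    simp only [d1]
    linarith [hβ']
  rw [this]
  exact hxb


set_option maxHeartbeats 1000000 in
theorem twoAndHalf_of_UC {K : ℝ} (h : UC Γ K) : TwoAndHalf Γ := by
  constructor
  · intro α hb hc
    obtain ⟨β, hβb, hβ⟩ := h α hb 0 le_rfl (fun g h k => by
      simp only [d2]
      rw [hc g h k]; simp)
    refine ⟨β, hβb, fun g h => ?_⟩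
    have h1 := hβ g h
    rw [mul_zero] at h1
    have h0 : α g h - d1 β g h = 0 :=
      abs_eq_zero.mp (le_antisymm h1 (abs_nonneg _))
    simp only [d1] at h0
    linarith
  · intro γ hγb happ
    have hK : 0 ≤ K := by
      obtain ⟨β, _, hβ⟩ := h (fun _ _ => (0:ℝ)) ⟨0, fun _ _ => by simp⟩ 1 zero_le_one
        (fun g h k => by simp [d2])
      have := hβ 1 1
      have := abs_nonneg ((fun _ _ => (0:ℝ)) 1 1 - d1 β 1 1)
      linarith [hβ 1 1]
    have key : ∀ n : ℕ, ∃ a : Γ → Γ → ℝ, (∃ C, ∀ g h, |a g h| ≤ C) ∧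
        ∀ g h k, |γ g h k - d2 a g h k| ≤ (2:ℝ)⁻¹ ^ n := by
      intro n
      obtain ⟨α, h1, h2⟩ := happ ((2:ℝ)⁻¹ ^ n) (by positivity)
      exact ⟨α, h1, fun g h k => h2 g h k⟩
    choose a ab ha using key
    have hu : ∀ n, ∀ g h k : Γ, |d2 (fun x y => a (n+1) x y - a n x y) g h k|
        ≤ 4 * (2:ℝ)⁻¹ ^ n := by
      intro n g h k
      have h1 := abs_le.mp (ha n g h k)
      have h2 := abs_le.mp (ha (n+1) g h k)
      have e : d2 (fun x y => a (n+1) x y - a n x y) g h k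
          = (γ g h k - d2 (a n) g h k) - (γ g h k - d2 (a (n+1)) g h k) := by
        simp only [d2]; ring
      rw [e]
      have hq : (2:ℝ)⁻¹ ^ (n+1) ≤ (2:ℝ)⁻¹ ^ n := by
        have hp : (0:ℝ) ≤ (2:ℝ)⁻¹ ^ n := by positivity
        rw [pow_succ]; nlinarith
      rw [abs_le]
      constructor <;> linarith [h1.1, h1.2, h2.1, h2.2]
    have hbex : ∀ n, ∃ b : Γ → ℝ, (∃ C, ∀ g, |b g| ≤ C) ∧
        ∀ g h, |(a (n+1) g h - a n g h) - d1 b g h| ≤ K * (4 * (2:ℝ)⁻¹ ^ n) := by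
      intro n
      obtain ⟨C1, hC1⟩ := ab (n+1)
      obtain ⟨C0, hC0⟩ := ab n
      exact h (fun x y => a (n+1) x y - a n x y)
        ⟨C1 + C0, fun g h => by
          have h1 := abs_le.mp (hC1 g h); have h2 := abs_le.mp (hC0 g h)
          rw [abs_le]; constructor <;> linarith [h1.1, h1.2, h2.1, h2.2]⟩
        _ (by positivity) (hu n)
    choose b hbb hbv using hbex
    set v : ℕ → Γ → Γ → ℝ := fun n x y => (a (n+1) x y - a n x y) - d1 (b n) x y with hv
    have hvb : ∀ n (g h : Γ), |v n g h| ≤ 4 * K * (2:ℝ)⁻¹ ^ n := by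
      intro n g h
      calc |v n g h| ≤ K * (4 * (2:ℝ)⁻¹ ^ n) := hbv n g h
      _ = 4 * K * (2:ℝ)⁻¹ ^ n := by ring
    have hgeo : Summable (fun n : ℕ => 4 * K * (2:ℝ)⁻¹ ^ n) :=
      (summable_geometric_of_lt_one (by norm_num) (by norm_num)).mul_left _
    have hsabs : ∀ g h : Γ, Summable (fun n => |v n g h|) := by
      intro g h
      exact Summable.of_nonneg_of_le (fun n => abs_nonneg _) (fun n => hvb n g h) hgeo
    have hsum : ∀ g h : Γ, Summable (fun n => v n g h) :=
      fun g h => (hsabs g h).of_abs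
    obtain ⟨C0, hC0⟩ := ab 0
    have htsum : ∀ g h : Γ, |∑' n, v n g h| ≤ 8 * K := by
      intro g h
      have h1 : |∑' n, v n g h| ≤ ∑' n, |v n g h| := by
        simpa [Real.norm_eq_abs] using norm_tsum_le_tsum_norm (f := fun n => v n g h) (by simpa [Real.norm_eq_abs] using hsabs g h)
      have h2 : (∑' n, |v n g h|) ≤ ∑' n : ℕ, 4 * K * (2:ℝ)⁻¹ ^ n :=
        Summable.tsum_le_tsum (fun n => hvb n g h) (hsabs g h) hgeo
      have h3 : (∑' n : ℕ, 4 * K * (2:ℝ)⁻¹ ^ n) = 8 * K := by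
        rw [tsum_mul_left, tsum_geometric_of_lt_one (by norm_num) (by norm_num)]
        norm_num
        ring
      linarith
    refine ⟨fun x y => a 0 x y + ∑' n, v n x y, ⟨C0 + 8 * K, fun g h => ?_⟩, fun g h k => ?_⟩
    · have h1 := abs_le.mp (hC0 g h)
      have h2 := abs_le.mp (htsum g h)
      dsimp only
      rw [abs_le]; constructor <;> linarith [h1.1, h1.2, h2.1, h2.2]
    · show d2 (fun x y => a 0 x y + ∑' n, v n x y) g h k = γ g h k
      have hterm : ∀ n, (v n h k - v n (g*h) k + v n g (h*k) - v n g h)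
          = d2 (a (n+1)) g h k - d2 (a n) g h k := by
        intro n
        simp only [hv, d1, d2, mul_assoc]
        ring
      have hsummable : Summable (fun n => v n h k - v n (g*h) k + v n g (h*k) - v n g h) :=
        (((hsum h k).sub (hsum (g*h) k)).add (hsum g (h*k))).sub (hsum g h)
      have hHas : HasSum (fun n => v n h k - v n (g*h) k + v n g (h*k) - v n g h)
          (γ g h k - d2 (a 0) g h k) := by
        rw [hsummable.hasSum_iff_tendsto_nat]
        have htel : ∀ n, (∑ i ∈ Finset.range n,
            (v i h k - v i (g*h) k + v i g (h*k) - v i g h))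
            = d2 (a n) g h k - d2 (a 0) g h k := by
          intro n
          rw [Finset.sum_congr rfl (fun i _ => hterm i)]
          exact Finset.sum_range_sub (fun i => d2 (a i) g h k) n
        simp only [htel]
        have h0 : Filter.Tendsto (fun n => d2 (a n) g h k - γ g h k)
            Filter.atTop (nhds 0) := by
          refine squeeze_zero_norm (fun n => ?_)
            (tendsto_pow_atTop_nhds_zero_of_lt_one (r := (2:ℝ)⁻¹) (by norm_num) (by norm_num))
          rw [Real.norm_eq_abs, abs_sub_comm]
          exact ha n g h k
        have h1 := h0.add_const (γ g h k)
        simp only [zero_add, sub_add_cancel] at h1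
        exact h1.sub_const (d2 (a 0) g h k)
      have hS : (∑' n, (v n h k - v n (g*h) k + v n g (h*k) - v n g h))
          = γ g h k - d2 (a 0) g h k := hHas.tsum_eq
      have hsplit : d2 (fun x y => a 0 x y + ∑' n, v n x y) g h k
          = d2 (a 0) g h k + ∑' n, (v n h k - v n (g*h) k + v n g (h*k) - v n g h) := by
        have e1 : (∑' n, (v n h k - v n (g*h) k + v n g (h*k) - v n g h))
            = ((∑' n, v n h k) - (∑' n, v n (g*h) k) + (∑' n, v n g (h*k))
              - (∑' n, v n g h)) := by
          rw [Summable.tsum_sub (((hsum h k).sub (hsum (g*h) k)).add (hsum g (h*k))) (hsum g h),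
            Summable.tsum_add ((hsum h k).sub (hsum (g*h) k)) (hsum g (h*k)),
            Summable.tsum_sub (hsum h k) (hsum (g*h) k)]
        rw [e1]
        simp only [d2]
        ring
      rw [hsplit, hS]
      ring

set_option maxHeartbeats 4000000 in
theorem UC_extension {G : Type*} [Group G] (N : Subgroup G) [hNN : N.Normal]
    {KN KQ : ℝ} (hKN : 0 ≤ KN) (hKQ : 0 ≤ KQ)
    (hN : UC N KN) (hQ : UC (G ⧸ N) KQ) :
    UC G (51 + 14 * KN + KQ * (205 + 56 * KN)) := by
  classical
  intro f hfb ε hε hρ0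
  obtain ⟨M0, hM0⟩ := hfb
  have hM0n : 0 ≤ M0 := le_trans (abs_nonneg _) (hM0 1 1)
  obtain ⟨c0, hc0⟩ : ∃ c : ℝ, c = f 1 1 := ⟨_, rfl⟩
  obtain ⟨f1, hf1⟩ : ∃ u : G → G → ℝ, u = fun g h => f g h - c0 := ⟨_, rfl⟩
  obtain ⟨M, hMdef⟩ : ∃ m : ℝ, m = 2 * M0 := ⟨_, rfl⟩
  have hMn : 0 ≤ M := by linarith
  have hM : ∀ g h : G, |f1 g h| ≤ M := by
    intro g h
    have h1 := abs_le.mp (hM0 g h)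
    have h2 := abs_le.mp (hM0 1 1)
    rw [hf1, hMdef]; dsimp only
    rw [hc0] at *
    rw [abs_le]; constructor <;> linarith [h1.1, h1.2, h2.1, h2.2]
  have hρ : ∀ x y z : G, |f1 y z - f1 (x*y) z + f1 x (y*z) - f1 x y| ≤ ε := by
    intro x y z
    have h := hρ0 x y z
    simp only [d2] at h
    have e : f1 y z - f1 (x*y) z + f1 x (y*z) - f1 x y
        = f y z - f (x*y) z + f x (y*z) - f x y := by simp only [hf1]; ring
    rw [e]; exact h
  have h1R : ∀ x : G, |f1 x 1| ≤ ε := by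
    intro x
    have h := hρ0 x 1 1
    simp only [d2, mul_one, one_mul] at h
    have e : f1 x 1 = -(f 1 1 - f x 1 + f x 1 - f x 1) := by simp only [hf1, hc0]; ring
    rw [e, abs_neg]; exact h
  -- restrict to N and get β
  obtain ⟨β₀, ⟨Cβ, hCβ⟩, hβ₀⟩ := hN (fun m n : N => f1 m n) ⟨M, fun m n => hM m n⟩ ε hε
    (fun m n k => by
      have h := hρ (m : G) n k
      simp only [d2, Subgroup.coe_mul]
      exact h)
  obtain ⟨β, hβdef⟩ : ∃ b : G → ℝ, b = fun x => if hx : x ∈ N then β₀ ⟨x, hx⟩ else 0 := ⟨_, rfl⟩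
  have hβb : ∀ x : G, |β x| ≤ max Cβ 0 := by
    intro x
    by_cases hx : x ∈ N
    · simp only [hβdef, dif_pos hx]; exact le_trans (hCβ _) (le_max_left _ _)
    · simp only [hβdef, dif_neg hx, abs_zero]; exact le_max_right _ _
  have he : ∀ x y : G, x ∈ N → y ∈ N → |β x + β y - β (x*y) - f1 x y| ≤ KN * ε := by
    intro x y hx hy
    have h := hβ₀ ⟨x, hx⟩ ⟨y, hy⟩
    simp only [d1] at h
    have hmul : (⟨x, hx⟩ * ⟨y, hy⟩ : N) = ⟨x*y, mul_mem hx hy⟩ := rfl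
    rw [hmul] at h
    simp only [hβdef, dif_pos hx, dif_pos hy, dif_pos (mul_mem hx hy)]
    have h' := abs_le.mp h
    rw [abs_le]; constructor <;> linarith [h'.1, h'.2]
  -- the conjugation defect dd
  obtain ⟨dd, hdd⟩ : ∃ d : G → G → ℝ,
    d = fun g n => β (g*n*g⁻¹) - β n + f1 g n + f1 (g*n) g⁻¹ - f1 g g⁻¹ := ⟨_, rfl⟩
  have claimA : ∀ g m n : G, m ∈ N → n ∈ N →
      |dd g (m*n) - dd g m - dd g n| ≤ (6 + 2*KN) * ε := by
    intro g m n hm hn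
    have e1 := he (g*m*g⁻¹) (g*n*g⁻¹) (hNN.conj_mem m hm g) (hNN.conj_mem n hn g)
    have e2 := he m n hm hn
    have r1 := hρ g m n
    have r2 := hρ (g*m) n g⁻¹
    have r3 := hρ g n g⁻¹
    have r4 := hρ (g*m*g⁻¹) g (n*g⁻¹)
    have r5 := hρ (g*m*g⁻¹) g g⁻¹
    have r6 := h1R (g*m*g⁻¹)
    simp only [hdd, mul_assoc, inv_mul_cancel_left, mul_inv_cancel_left, mul_inv_cancel,
      inv_mul_cancel, one_mul, mul_one] at e1 e2 r1 r2 r3 r4 r5 r6 ⊢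
    have E1 := abs_le.mp e1; have E2 := abs_le.mp e2
    have R1 := abs_le.mp r1; have R2 := abs_le.mp r2; have R3 := abs_le.mp r3
    have R4 := abs_le.mp r4; have R5 := abs_le.mp r5; have R6 := abs_le.mp r6
    rw [abs_le]
    constructor <;>
      linarith [E1.1, E1.2, E2.1, E2.2, R1.1, R1.2, R2.1, R2.2, R3.1, R3.2, R4.1, R4.2,
        R5.1, R5.2, R6.1, R6.2]
  have hdbd : ∀ g n : G, |dd g n| ≤ 2 * max Cβ 0 + 3 * M := by
    intro g n
    have b1 := abs_le.mp (hβb (g*n*g⁻¹)); have b2 := abs_le.mp (hβb n)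
    have c1 := abs_le.mp (hM g n); have c2 := abs_le.mp (hM (g*n) g⁻¹)
    have c3 := abs_le.mp (hM g g⁻¹)
    simp only [hdd]
    rw [abs_le]
    constructor <;> linarith [b1.1, b1.2, b2.1, b2.2, c1.1, c1.2, c2.1, c2.2, c3.1, c3.2]
  have hpow : ∀ g n : G, n ∈ N → ∀ k : ℕ,
      |dd g (n^k) - k * dd g n| ≤ ε + k * ((6 + 2*KN) * ε) := by
    intro g n hn k
    induction k with
    | zero =>
      simp only [pow_zero, Nat.cast_zero, zero_mul, sub_zero, add_zero]
      have e : dd g 1 = f1 g 1 := by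
        simp only [hdd, mul_one, mul_inv_cancel]
        ring
      rw [e]; exact h1R g
    | succ k ih =>
      have hA := claimA g (n^k) n (pow_mem hn k) hn
      rw [← pow_succ] at hA
      have E1 := abs_le.mp hA; have E2 := abs_le.mp ih
      rw [abs_le]
      push_cast
      constructor <;> linarith [E1.1, E1.2, E2.1, E2.2]
  have hdsmall : ∀ g n : G, n ∈ N → |dd g n| ≤ (6 + 2*KN) * ε := by
    intro g n hn
    by_contra hcon
    push_neg at hcon
    obtain ⟨c, hcdef⟩ : ∃ c : ℝ, c = 2 * max Cβ 0 + 3 * M + ε := ⟨_, rfl⟩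
    have hc : 0 ≤ c := by
      have : (0:ℝ) ≤ max Cβ 0 := le_max_right _ _
      rw [hcdef]; linarith
    obtain ⟨k, hk⟩ := exists_nat_gt (c / (|dd g n| - (6 + 2*KN) * ε))
    have hd2 : 0 < |dd g n| - (6 + 2*KN) * ε := by linarith
    have hkpos : (0:ℝ) < k := lt_of_le_of_lt (div_nonneg hc (le_of_lt hd2)) hk
    have hlt : c < (k:ℝ) * (|dd g n| - (6 + 2*KN) * ε) := by
      rw [div_lt_iff₀ hd2] at hk; linarith [hk]
    rw [mul_sub] at hlt
    have hkk := hpow g n hn k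
    have habs : (k:ℝ) * |dd g n| ≤ |dd g (n^k)| + (ε + k * ((6 + 2*KN) * ε)) := by
      have t1 : (k:ℝ) * |dd g n| = |(k:ℝ) * dd g n| := by rw [abs_mul, Nat.abs_cast]
      have t2 : |(k:ℝ) * dd g n| ≤ |(k:ℝ) * dd g n - dd g (n^k)| + |dd g (n^k)| := by
        have := abs_add_le ((k:ℝ) * dd g n - dd g (n^k)) (dd g (n^k))
        simpa using this
      have t3 : |(k:ℝ) * dd g n - dd g (n^k)| ≤ ε + k * ((6 + 2*KN) * ε) := by
        rw [abs_sub_comm]; exact hkk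
      linarith
    linarith [hdbd g (n^k), habs, hlt]
  -- the key normality estimate
  have claimPsi : ∀ x m : G, m ∈ N →
      |β (x*m*x⁻¹) - f1 (x*m*x⁻¹) x + f1 x m - β m| ≤ (8 + 2*KN) * ε := by
    intro x m hm
    have hdx := hdsmall x m hm
    have r5 := hρ (x*m*x⁻¹) x x⁻¹
    have r6 := h1R (x*m*x⁻¹)
    simp only [hdd, mul_assoc, inv_mul_cancel_left, mul_inv_cancel_left, mul_inv_cancel,
      inv_mul_cancel, one_mul, mul_one] at hdx r5 r6 ⊢
    have E1 := abs_le.mp hdx; have R5 := abs_le.mp r5; have R6 := abs_le.mp r6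
    rw [abs_le]; constructor <;> linarith [E1.1, E1.2, R5.1, R5.2, R6.1, R6.2]
  -- section of the quotient
  obtain ⟨σ, hσdef⟩ : ∃ s : G ⧸ N → G, s = fun q => q.out := ⟨_, rfl⟩
  have hσ : ∀ q : G ⧸ N, ((σ q : G) : G ⧸ N) = q := by
    intro q; rw [hσdef]; exact QuotientGroup.out_eq' q
  obtain ⟨sg, hsgdef⟩ : ∃ s : G → G, s = fun g => σ ((g : G) : G ⧸ N) := ⟨_, rfl⟩
  have hsgz : ∀ q : G ⧸ N, sg (σ q) = σ q := by
    intro q; simp only [hsgdef]; rw [hσ q]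
  have hsg_mul : ∀ g m : G, m ∈ N → sg (g*m) = sg g := by
    intro g m hm
    simp only [hsgdef]
    rw [QuotientGroup.mk_mul_of_mem g hm]
  have hng_mem : ∀ g : G, g * (sg g)⁻¹ ∈ N := by
    intro g
    rw [← QuotientGroup.eq_one_iff]
    rw [QuotientGroup.mk_mul, QuotientGroup.mk_inv]
    simp only [hsgdef]
    rw [hσ]
    exact mul_inv_cancel _
  have hm1 : ∀ g : G, (sg g)⁻¹ * g ∈ N := by
    intro g
    rw [← QuotientGroup.eq_one_iff]
    rw [QuotientGroup.mk_mul, QuotientGroup.mk_inv]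
    simp only [hsgdef]
    rw [hσ]
    exact inv_mul_cancel _
  obtain ⟨bb, hbbdef⟩ : ∃ b : G → ℝ,
    b = fun g => β (g * (sg g)⁻¹) - f1 (g * (sg g)⁻¹) (sg g) := ⟨_, rfl⟩
  have claimPhi : ∀ g m : G, m ∈ N →
      |bb (g*m) - bb g - β m + f1 g m| ≤ (10 + 3*KN) * ε := by
    intro g m hm
    have hsgm := hsg_mul g m hm
    have hPsi := claimPsi (sg g) m hm
    have r1 := hρ (g * (sg g)⁻¹) (sg g * m * (sg g)⁻¹) (sg g)
    have r2 := hρ (g * (sg g)⁻¹) (sg g) m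
    have e1 := he (g * (sg g)⁻¹) (sg g * m * (sg g)⁻¹) (hng_mem g)
      (hNN.conj_mem m hm (sg g))
    simp only [hbbdef, hsgm, mul_assoc, inv_mul_cancel_left, mul_inv_cancel_left,
      mul_inv_cancel, inv_mul_cancel, one_mul, mul_one] at hPsi r1 r2 e1 ⊢
    have P := abs_le.mp hPsi; have R1 := abs_le.mp r1; have R2 := abs_le.mp r2
    have E1 := abs_le.mp e1
    rw [abs_le]
    constructor <;> linarith [P.1, P.2, R1.1, R1.2, R2.1, R2.2, E1.1, E1.2]
  obtain ⟨F, hF⟩ : ∃ u : G → G → ℝ,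
    u = fun g h => f1 g h - bb g - bb h + bb (g*h) := ⟨_, rfl⟩
  have claim_ii : ∀ g h m : G, m ∈ N → |F g (h*m) - F g h| ≤ (21 + 6*KN) * ε := by
    intro g h m hm
    have p1 := claimPhi h m hm
    have p2 := claimPhi (g*h) m hm
    have r1 := hρ g h m
    simp only [hF, mul_assoc] at p1 p2 r1 ⊢
    have P1 := abs_le.mp p1; have P2 := abs_le.mp p2; have R1 := abs_le.mp r1
    rw [abs_le]
    constructor <;> linarith [P1.1, P1.2, P2.1, P2.2, R1.1, R1.2]
  have claim_i : ∀ g h m : G, m ∈ N → |F (g*m) h - F g h| ≤ (30 + 8*KN) * ε := by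
    intro g h m hm
    have hm' : h⁻¹ * m * h ∈ N := by
      have := hNN.conj_mem m hm h⁻¹
      simpa using this
    have p1 := claimPhi g m hm
    have p2 := claimPhi (g*h) (h⁻¹*m*h) hm'
    have r3 := hρ g m h
    have r4 := hρ g h (h⁻¹*m*h)
    have hPsi := claimPsi h (h⁻¹*m*h) hm'
    simp only [hF, mul_assoc, inv_mul_cancel_left, mul_inv_cancel_left, mul_inv_cancel,
      inv_mul_cancel, one_mul, mul_one] at p1 p2 r3 r4 hPsi ⊢
    have P1 := abs_le.mp p1; have P2 := abs_le.mp p2; have R3 := abs_le.mp r3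
    have R4 := abs_le.mp r4; have PS := abs_le.mp hPsi
    rw [abs_le]
    constructor <;> linarith [P1.1, P1.2, P2.1, P2.2, R3.1, R3.2, R4.1, R4.2, PS.1, PS.2]
  have hproj : ∀ g h : G, |F g h - F (sg g) (sg h)| ≤ (51 + 14*KN) * ε := by
    intro g h
    have h1 := claim_i (sg g) h ((sg g)⁻¹ * g) (hm1 g)
    rw [mul_inv_cancel_left] at h1
    have h2 := claim_ii (sg g) (sg h) ((sg h)⁻¹ * h) (hm1 h)
    rw [mul_inv_cancel_left] at h2
    have E1 := abs_le.mp h1; have E2 := abs_le.mp h2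
    rw [abs_le]; constructor <;> linarith [E1.1, E1.2, E2.1, E2.2]
  obtain ⟨fbar, hfbar⟩ : ∃ u : (G ⧸ N) → (G ⧸ N) → ℝ,
    u = fun p q => F (σ p) (σ q) := ⟨_, rfl⟩
  have hd2F : ∀ x y z : G,
      F y z - F (x*y) z + F x (y*z) - F x y
        = f1 y z - f1 (x*y) z + f1 x (y*z) - f1 x y := by
    intro x y z
    simp only [hF, mul_assoc]
    ring
  have hquasi : ∀ p q r : G ⧸ N, |d2 fbar p q r| ≤ (205 + 56*KN) * ε := by
    intro p q r
    have hxy : σ (p * q) = sg (σ p * σ q) := by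
      simp only [hsgdef]
      congr 1
      rw [QuotientGroup.mk_mul, hσ p, hσ q]
    have hyz : σ (q * r) = sg (σ q * σ r) := by
      simp only [hsgdef]
      congr 1
      rw [QuotientGroup.mk_mul, hσ q, hσ r]
    have A1 := hproj (σ p * σ q) (σ r)
    have A2 := hproj (σ p) (σ q * σ r)
    simp only [hsgz] at A1 A2
    have hrF : |F (σ q) (σ r) - F (σ p * σ q) (σ r) + F (σ p) (σ q * σ r)
        - F (σ p) (σ q)| ≤ ε := by
      rw [hd2F]; exact hρ (σ p) (σ q) (σ r)
    simp only [d2, hfbar]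
    rw [hxy, hyz]
    have E1 := abs_le.mp A1; have E2 := abs_le.mp A2; have E3 := abs_le.mp hrF
    rw [abs_le]; constructor <;> linarith [E1.1, E1.2, E2.1, E2.2, E3.1, E3.2]
  have hbbB : ∀ g : G, |bb g| ≤ max Cβ 0 + M := by
    intro g
    have b1 := abs_le.mp (hβb (g * (sg g)⁻¹))
    have c1 := abs_le.mp (hM (g * (sg g)⁻¹) (sg g))
    simp only [hbbdef]
    rw [abs_le]; constructor <;> linarith [b1.1, b1.2, c1.1, c1.2]
  have hFB : ∀ g h : G, |F g h| ≤ M + 3 * (max Cβ 0 + M) := by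
    intro g h
    have c1 := abs_le.mp (hM g h)
    have b1 := abs_le.mp (hbbB g); have b2 := abs_le.mp (hbbB h)
    have b3 := abs_le.mp (hbbB (g*h))
    simp only [hF]
    rw [abs_le]; constructor <;> linarith [c1.1, c1.2, b1.1, b1.2, b2.1, b2.2, b3.1, b3.2]
  obtain ⟨βQ, ⟨CQ, hCQ⟩, hβQ⟩ := hQ fbar
    ⟨M + 3 * (max Cβ 0 + M), fun p q => by rw [hfbar]; exact hFB (σ p) (σ q)⟩
    ((205 + 56*KN) * ε) (mul_nonneg (by linarith) hε) hquasi
  refine ⟨fun g => (bb g + βQ ((g : G) : G ⧸ N)) + c0,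
    ⟨(max Cβ 0 + M) + CQ + |c0|, fun g => ?_⟩, ?_⟩
  · have b1 := abs_le.mp (hbbB g)
    have b2 := abs_le.mp (hCQ ((g : G) : G ⧸ N))
    dsimp only
    rw [abs_le]; constructor <;> linarith [b1.1, b1.2, b2.1, b2.2, abs_nonneg c0,
      neg_abs_le c0, le_abs_self c0]
  · intro g h
    have h1 := hproj g h
    have h2 := hβQ ((g : G) : G ⧸ N) ((h : G) : G ⧸ N)
    have hfb2 : fbar ((g : G) : G ⧸ N) ((h : G) : G ⧸ N) = F (sg g) (sg h) := by
      simp only [hfbar, hsgdef]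
    rw [hfb2] at h2
    simp only [d1, ← QuotientGroup.mk_mul] at h2
    have e : f g h - d1 (fun g => (bb g + βQ ((g : G) : G ⧸ N)) + c0) g h
        = (F g h - F (sg g) (sg h))
          + (F (sg g) (sg h) - (βQ ((g : G) : G ⧸ N) + βQ ((h : G) : G ⧸ N)
            - βQ (((g*h : G) : G ⧸ N)))) := by
      simp only [d1, hF, hf1]
      ring
    rw [e]
    have E1 := abs_le.mp h1; have E2 := abs_le.mp h2
    rw [abs_le]
    constructor <;>
      [ nlinarith [E1.1, E1.2, E2.1, E2.2, hε, hKQ, hKN];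
        nlinarith [E1.1, E1.2, E2.1, E2.2, hε, hKQ, hKN] ]

theorem twoAndHalf_extension {G : Type*} [Group G] (N : Subgroup G) [N.Normal]
    (hN : TwoAndHalf N) (hQ : TwoAndHalf (G ⧸ N)) : TwoAndHalf G := by
  obtain ⟨KN, hKN, hUN⟩ := uniform_of_twoAndHalf hN
  obtain ⟨KQ, hKQ, hUQ⟩ := uniform_of_twoAndHalf hQ
  exact twoAndHalf_of_UC (UC_extension N hKN hKQ hUN hUQ)

theorem twoAndHalf_of_mulEquiv {A B : Type*} [Group A] [Group B] (e : A ≃* B)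
    (h : TwoAndHalf A) : TwoAndHalf B := by
  constructor
  · rintro α ⟨C, hC⟩ hc
    obtain ⟨β, ⟨Cb, hCb⟩, hβ⟩ := h.1 (fun g h => α (e g) (e h)) ⟨C, fun g h => hC _ _⟩
      (fun g h k => by
        have := hc (e g) (e h) (e k)
        simpa [map_mul] using this)
    refine ⟨fun b => β (e.symm b), ⟨Cb, fun g => hCb _⟩, fun g h => ?_⟩
    have := hβ (e.symm g) (e.symm h)
    simpa [← map_mul, e.apply_symm_apply] using this
  · rintro γ ⟨C, hC⟩ happ
    obtain ⟨α, ⟨Ca, hCa⟩, hα⟩ := h.2 (fun g h k => γ (e g) (e h) (e k))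
      ⟨C, fun _ _ _ => hC _ _ _⟩
      (fun ε hε => by
        obtain ⟨α, ⟨Ca, hCa⟩, hα⟩ := happ ε hε
        exact ⟨fun g h => α (e g) (e h), ⟨Ca, fun _ _ => hCa _ _⟩,
          fun g h k => by
            have := hα (e g) (e h) (e k)
            simpa [map_mul] using this⟩)
    refine ⟨fun g h => α (e.symm g) (e.symm h), ⟨Ca, fun _ _ => hCa _ _⟩, fun g h k => ?_⟩
    have := hα (e.symm g) (e.symm h) (e.symm k)
    simpa [← map_mul, e.apply_symm_apply] using this

theorem twoAndHalf_of_subsingleton {A : Type*} [Group A] [Subsingleton A] : TwoAndHalf A := by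
  have harg : ∀ (α : A → A → ℝ) (x y : A), α x y = α 1 1 := fun α x y => by
    rw [Subsingleton.elim x 1, Subsingleton.elim y 1]
  constructor
  · intro α _ _
    refine ⟨fun _ => α 1 1, ⟨|α 1 1|, fun g => le_refl _⟩, fun g h => ?_⟩
    rw [harg α g h]
    ring
  · intro γ _ happ
    have h0 : ∀ g h k : A, γ g h k = 0 := by
      intro g h k
      have key : ∀ ε > (0:ℝ), |γ g h k| ≤ ε := by
        intro ε hε
        obtain ⟨α, _, hα⟩ := happ ε hε
        have h1 := hα g h k
        have e : α h k - α (g*h) k + α g (h*k) - α g h = 0 := by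
          rw [harg α h k, harg α (g*h) k, harg α g (h*k), harg α g h]
          ring
        rw [e, sub_zero] at h1
        exact h1
      by_contra hne
      have hpos : 0 < |γ g h k| := abs_pos.mpr hne
      have := key (|γ g h k|/2) (by linarith)
      linarith
    exact ⟨fun _ _ => 0, ⟨0, fun _ _ => by simp⟩, fun g h k => by simp [h0]⟩

theorem twoAndHalf_prod {A : Type*} {B : Type*} [Group A] [Group B]
    (hA : TwoAndHalf A) (hB : TwoAndHalf B) : TwoAndHalf (A × B) := by
  let e : B ≃* (MonoidHom.fst A B).ker :=
    { toFun := fun b => ⟨(1, b), MonoidHom.mem_ker.mpr rfl⟩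
      invFun := fun x => (x : A × B).2
      left_inv := fun b => rfl
      right_inv := fun x => by
        obtain ⟨⟨a, b⟩, hx⟩ := x
        have ha : a = 1 := hx
        subst ha
        rfl
      map_mul' := fun b c => by
        apply Subtype.ext
        simp }
  have hker : TwoAndHalf (MonoidHom.fst A B).ker := twoAndHalf_of_mulEquiv e hB
  have hsurj : Function.Surjective (MonoidHom.fst A B) := fun a => ⟨(a, 1), rfl⟩
  have hquot : TwoAndHalf ((A × B) ⧸ (MonoidHom.fst A B).ker) :=
    twoAndHalf_of_mulEquiv (QuotientGroup.quotientKerEquivOfSurjective _ hsurj).symm hA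
  exact twoAndHalf_extension _ hker hquot

def piCongrLeftMul {α β : Type*} (G : β → Type*) [∀ b, Group (G b)] (e : α ≃ β) :
    (∀ a, G (e a)) ≃* (∀ b, G b) :=
  { Equiv.piCongrLeft G e with
    map_mul' := fun F H => by
      funext b
      obtain ⟨a, rfl⟩ := e.surjective b
      simp only [Equiv.toFun_as_coe, Pi.mul_apply, Equiv.piCongrLeft_apply_apply] }

def optionMulEquiv {κ : Type*} (G : Option κ → Type*) [∀ i, Group (G i)] :
    (G none × ∀ j, G (some j)) ≃* (∀ i, G i) where
  toFun p := fun i => match i with | none => p.1 | some j => p.2 j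
  invFun F := (F none, fun j => F (some j))
  left_inv p := rfl
  right_inv F := by funext i; cases i <;> rfl
  map_mul' p q := by funext i; cases i <;> rfl

theorem twoAndHalf_pi {ι : Type v} [Fintype ι] (G : ι → Type u) [∀ i, Group (G i)]
    (hG : ∀ i, TwoAndHalf (G i)) : TwoAndHalf (∀ i, G i) := by
  revert G
  refine Fintype.induction_empty_option
    (P := fun ι' [Fintype ι'] => ∀ (G : ι' → Type u) [∀ i, Group (G i)],
      (∀ i, TwoAndHalf (G i)) → TwoAndHalf (∀ i, G i)) ?_ ?_ ?_ ι
  · intro α β _ e hα G _ hG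
    have h1 := hα (fun a => G (e a)) (fun a => hG (e a))
    exact twoAndHalf_of_mulEquiv (piCongrLeftMul G e) h1
  · intro G _ _
    haveI : Subsingleton (∀ i, G i) := ⟨fun f g => funext fun i => i.elim⟩
    exact twoAndHalf_of_subsingleton
  · intro κ _ hκ G _ hG
    have h1 := hκ (fun j => G (some j)) (fun j => hG (some j))
    have h2 := hG none
    exact twoAndHalf_of_mulEquiv (optionMulEquiv G) (twoAndHalf_prod h2 h1)

end Stmt15Proof



/-- The 2½-property is preserved under group extensions: if `N ⊴ G` and both `N` and `G/N`
have the 2½-property, then so does `G`.  In particular, a finite direct product of groups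
with the 2½-property has the 2½-property. -/
theorem stmt_15 :
    (∀ (G : Type u) [Group G] (N : Subgroup G) [N.Normal],
      TwoAndHalf N → TwoAndHalf (G ⧸ N) → TwoAndHalf G) ∧
    (∀ (ι : Type v) [Fintype ι] (G : ι → Type u) [∀ i, Group (G i)],
      (∀ i, TwoAndHalf (G i)) → TwoAndHalf (∀ i, G i)) := by
  constructor
  · intro G _ N _ hN hQ
    exact Stmt15Proof.twoAndHalf_extension N hN hQ
  · intro ι _ G _ hG
    exact Stmt15Proof.twoAndHalf_pi G hG
end
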